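/- arXiv:2407.21723 — 5 statements merged into one kernel-verified Lean document; each statement's English description precedes it below -/
import Mathlib

section
/- The set of gapped weighted utility arrays is not closed under addition. Concretely, consider the two-party setting with O_1 = O_2 = D_1 = D_2 = {0,1}, and define 4·w_CHSH(o_1,o_2;d_1,d_2) := (o_1 ∧ o_2) ⊕ d_1 ⊕ d_2 ⊕ 1 and 4·w̄_CHSH(o_1,o_2;d_1,d_2) := (o_1 ∧ o_2) ⊕ d_1 ⊕ d_2 (values in {0,1} viewed as reals). Then w_CHSH is gapped and w̄_CHSH is gapped, but their sum w_CHSH + w̄_CHSH = (1/4)·e (where e is the all-ones array) is gapless. -/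
open scoped BigOperators

namespace TC

/-- A behavior: a conditional probability distribution over joint decisions given
joint observations. -/
def IsBehavior {n : ℕ} {O D : Fin n → Type} [∀ i, Fintype (D i)]
    (p : (∀ i, O i) → (∀ i, D i) → ℝ) : Prop :=
  (∀ o d, 0 ≤ p o d) ∧ ∀ o, ∑ d, p o d = 1

/-- The behavior of a deterministic strategy `f`. -/
def detBehavior {n : ℕ} {O D : Fin n → Type} [∀ i, DecidableEq (D i)]
    (f : ∀ i, O i → D i) : (∀ i, O i) → (∀ i, D i) → ℝ :=
  fun o d => ∏ i, if d i = f i (o i) then (1 : ℝ) else 0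

/-- Expected utility of a behavior `p` with respect to a weighted utility array `w`. -/
def expUtility {n : ℕ} {O D : Fin n → Type} [∀ i, Fintype (O i)] [∀ i, Fintype (D i)]
    (w p : (∀ i, O i) → (∀ i, D i) → ℝ) : ℝ :=
  ∑ o, ∑ d, p o d * w o d

/-- A quantum strategy: a finite dimension for each party, a projective measurement
(indexed by decisions) for each party and observation, and a shared unit state vector. -/
structure QStrategy {n : ℕ} (O D : Fin n → Type) [∀ i, Fintype (O i)] [∀ i, Fintype (D i)] where
  dim : Fin n → ℕ
  dim_pos : ∀ i, 0 < dim i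
  proj : ∀ i, O i → D i → Matrix (Fin (dim i)) (Fin (dim i)) ℂ
  proj_herm : ∀ i o d, (proj i o d).IsHermitian
  proj_idem : ∀ i o d, proj i o d * proj i o d = proj i o d
  proj_orth : ∀ i o d d', d ≠ d' → proj i o d * proj i o d' = 0
  proj_sum : ∀ i o, ∑ d, proj i o d = 1
  state : (∀ i, Fin (dim i)) → ℂ
  state_norm : ∑ x, Complex.normSq (state x) = 1

/-- The behavior determined by a family of "projectors" (measurement operators, one for each
party, observation and decision) and a shared state:
`p(d|o) = ⟨ψ, (⊗ᵢ Πᵢ^{(dᵢ|oᵢ)}) ψ⟩`. -/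
noncomputable def projBehavior {n : ℕ} {O D : Fin n → Type} (dim : Fin n → ℕ)
    (proj : ∀ i, O i → D i → Matrix (Fin (dim i)) (Fin (dim i)) ℂ)
    (ψ : (∀ i, Fin (dim i)) → ℂ) : (∀ i, O i) → (∀ i, D i) → ℝ :=
  fun o d =>
    (∑ x, ∑ y, (starRingEnd ℂ) (ψ x) * (∏ i, proj i (o i) (d i) (x i) (y i)) * ψ y).re

/-- The quantum behavior of a quantum strategy. -/
noncomputable def QStrategy.behavior {n : ℕ} {O D : Fin n → Type}
    [∀ i, Fintype (O i)] [∀ i, Fintype (D i)] (S : QStrategy O D) :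
    (∀ i, O i) → (∀ i, D i) → ℝ :=
  projBehavior S.dim S.proj S.state

/-- The classical value: the maximum expected utility over deterministic strategies. -/
noncomputable def cValue {n : ℕ} {O D : Fin n → Type} [∀ i, Fintype (O i)] [∀ i, Fintype (D i)]
    [∀ i, DecidableEq (D i)] (w : (∀ i, O i) → (∀ i, D i) → ℝ) : ℝ :=
  ⨆ f : ∀ i, O i → D i, expUtility w (detBehavior f)

/-- The quantum value: the supremum of expected utilities over all quantum strategies
(of all finite dimensions). -/
noncomputable def qValue {n : ℕ} {O D : Fin n → Type} [∀ i, Fintype (O i)] [∀ i, Fintype (D i)]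
    (w : (∀ i, O i) → (∀ i, D i) → ℝ) : ℝ :=
  sSup {x : ℝ | ∃ S : QStrategy O D, x = expUtility w S.behavior}

/-- The gap `g(w) = q*(w) − c*(w)`. -/
noncomputable def gap {n : ℕ} {O D : Fin n → Type} [∀ i, Fintype (O i)] [∀ i, Fintype (D i)]
    [∀ i, DecidableEq (D i)] (w : (∀ i, O i) → (∀ i, D i) → ℝ) : ℝ :=
  qValue w - cValue w

/-- `w` is gapped if its gap is positive. -/
def Gapped {n : ℕ} {O D : Fin n → Type} [∀ i, Fintype (O i)] [∀ i, Fintype (D i)]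
    [∀ i, DecidableEq (D i)] (w : (∀ i, O i) → (∀ i, D i) → ℝ) : Prop :=
  0 < gap w

/-- A quantum strategy is degenerate if some party uses a trivial (zero or identity)
measurement operator. -/
def QStrategy.Degenerate {n : ℕ} {O D : Fin n → Type}
    [∀ i, Fintype (O i)] [∀ i, Fintype (D i)] (S : QStrategy O D) : Prop :=
  ∃ i o d, S.proj i o d = 0 ∨ S.proj i o d = 1

/-- A classical behavior: a convex combination of deterministic behaviors. -/
def IsClassicalBehavior {n : ℕ} {O D : Fin n → Type}
    [∀ i, Fintype (O i)] [∀ i, DecidableEq (O i)] [∀ i, Fintype (D i)] [∀ i, DecidableEq (D i)]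
    (p : (∀ i, O i) → (∀ i, D i) → ℝ) : Prop :=
  ∃ μ : (∀ i, O i → D i) → ℝ, (∀ f, 0 ≤ μ f) ∧ ∑ f, μ f = 1 ∧
    ∀ o d, p o d = ∑ f, μ f * detBehavior f o d

/-- The lossy behavior built from a family of measurement operators, a shared state, a fallback
deterministic strategy `f`, and efficiencies `η`: the sum over subsets `T` of parties that
experience loss, weighted by the loss probabilities, of the behavior of the `T`-semiclassical
strategy (parties in `T` use the trivial projectors implementing `f` locally). -/
noncomputable def lossyProjBehavior {n : ℕ} {O D : Fin n → Type} [∀ i, DecidableEq (D i)]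
    (dim : Fin n → ℕ) (proj : ∀ i, O i → D i → Matrix (Fin (dim i)) (Fin (dim i)) ℂ)
    (ψ : (∀ i, Fin (dim i)) → ℂ) (f : ∀ i, O i → D i) (η : Fin n → ℝ) :
    (∀ i, O i) → (∀ i, D i) → ℝ :=
  fun o d => ∑ T : Finset (Fin n),
    ((∏ i ∈ T, (1 - η i)) * ∏ i ∈ Tᶜ, η i) *
      projBehavior dim
        (fun i oi di =>
          if i ∈ T then (if di = f i oi then (1 : Matrix (Fin (dim i)) (Fin (dim i)) ℂ) else 0)
          else proj i oi di)
        ψ o d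

/-- The `{ηᵢ}`-lossy behavior of a pair `(S_q, S_d)` of a quantum strategy and a fallback
deterministic strategy. -/
noncomputable def lossyBehavior {n : ℕ} {O D : Fin n → Type}
    [∀ i, Fintype (O i)] [∀ i, Fintype (D i)] [∀ i, DecidableEq (D i)]
    (S : QStrategy O D) (f : ∀ i, O i → D i) (η : Fin n → ℝ) :
    (∀ i, O i) → (∀ i, D i) → ℝ :=
  lossyProjBehavior S.dim S.proj S.state f η

/-- The `ν`-noisy behavior of a quantum strategy:
`p_o^d(ν) = tr[(⊗ᵢ Πᵢ^{(dᵢ|oᵢ)}) ((1−ν)|ψ⟩⟨ψ| + ν π)]` with `π` the maximally mixed state. -/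
noncomputable def noisyBehavior {n : ℕ} {O D : Fin n → Type}
    [∀ i, Fintype (O i)] [∀ i, Fintype (D i)] (S : QStrategy O D) (ν : ℝ) :
    (∀ i, O i) → (∀ i, D i) → ℝ :=
  fun o d =>
    (∑ x, ∑ y, (∏ i, S.proj i (o i) (d i) (x i) (y i)) *
      ((1 - ν) * (S.state y * (starRingEnd ℂ) (S.state x)) +
        ((ν : ℂ) / (∏ i, (S.dim i : ℂ))) * (if x = y then 1 else 0))).re

end TC

namespace TC

/-- The CHSH weighted utility array (uniform inputs): `4·w(o;d) = (o₁∧o₂) ⊕ d₁ ⊕ d₂ ⊕ 1`,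
i.e. `w(o;d) = 1/4` iff `o₁∧o₂ = d₁⊕d₂`. -/
noncomputable def wCHSH : (Fin 2 → Bool) → (Fin 2 → Bool) → ℝ :=
  fun o d => if (o 0 && o 1) = (d 0 != d 1) then 1/4 else 0

/-- The anti-CHSH weighted utility array (opposite winning condition):
`4·w̄(o;d) = (o₁∧o₂) ⊕ d₁ ⊕ d₂`. -/
noncomputable def wAntiCHSH : (Fin 2 → Bool) → (Fin 2 → Bool) → ℝ :=
  fun o d => if (o 0 && o 1) = (d 0 != d 1) then 0 else 1/4

end TC

namespace TCAux

-- sum over pi type on Fin 2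
lemma sum_pi2 {α : Fin 2 → Type*} [∀ i, Fintype (α i)] {M : Type*} [AddCommMonoid M]
    (g : (∀ i, α i) → M) :
    ∑ x, g x = ∑ j : α 0, ∑ k : α 1, g ((piFinTwoEquiv α).symm (j, k)) := by
  rw [← Equiv.sum_comp (piFinTwoEquiv α).symm g, Fintype.sum_prod_type]

@[simp] lemma piFinTwo_symm_zero {α : Fin 2 → Type*} (j : α 0) (k : α 1) :
    (piFinTwoEquiv α).symm (j, k) 0 = j := rfl

@[simp] lemma piFinTwo_symm_one {α : Fin 2 → Type*} (j : α 0) (k : α 1) :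
    (piFinTwoEquiv α).symm (j, k) 1 = k := rfl

end TCAux

set_option maxHeartbeats 1000000
open ComplexOrder
namespace TC

variable {n : ℕ} {O D : Fin n → Type} [∀ i, Fintype (O i)] [∀ i, Fintype (D i)]

noncomputable def tensorProj (S : QStrategy O D) (o : ∀ i, O i) (d : ∀ i, D i) :
    Matrix (∀ i, Fin (S.dim i)) (∀ i, Fin (S.dim i)) ℂ :=
  Matrix.of fun x y => ∏ i, S.proj i (o i) (d i) (x i) (y i)

lemma tensorProj_herm (S : QStrategy O D) (o : ∀ i, O i) (d : ∀ i, D i) :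
    (tensorProj S o d).IsHermitian := by
  ext x y
  simp only [Matrix.conjTranspose_apply, tensorProj, Matrix.of_apply]
  rw [star_prod]
  exact Finset.prod_congr rfl fun i _ => (S.proj_herm i (o i) (d i)).apply _ _

lemma tensorProj_idem (S : QStrategy O D) (o : ∀ i, O i) (d : ∀ i, D i) :
    tensorProj S o d * tensorProj S o d = tensorProj S o d := by
  ext x y
  simp only [Matrix.mul_apply, tensorProj, Matrix.of_apply, ← Finset.prod_mul_distrib]
  calc ∑ z : ∀ i, Fin (S.dim i), ∏ i,
        (S.proj i (o i) (d i) (x i) (z i) * S.proj i (o i) (d i) (z i) (y i))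
      = ∏ i, ∑ j, (S.proj i (o i) (d i) (x i) j * S.proj i (o i) (d i) j (y i)) :=
        (Fintype.prod_sum
          (fun i j => S.proj i (o i) (d i) (x i) j * S.proj i (o i) (d i) j (y i))).symm
    _ = ∏ i, S.proj i (o i) (d i) (x i) (y i) := by
        refine Finset.prod_congr rfl fun i _ => ?_
        rw [← Matrix.mul_apply, S.proj_idem]

lemma behavior_eq_dot (S : QStrategy O D) (o : ∀ i, O i) (d : ∀ i, D i) :
    S.behavior o d = (dotProduct (star S.state)
      ((tensorProj S o d).mulVec S.state)).re := by
  simp only [QStrategy.behavior, projBehavior, dotProduct, Matrix.mulVec,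
    tensorProj, Matrix.of_apply, Pi.star_apply, Finset.mul_sum]
  congr 1
  refine Finset.sum_congr rfl fun x _ => Finset.sum_congr rfl fun y _ => ?_
  rw [Complex.star_def]; ring

lemma behavior_nonneg (S : QStrategy O D) (o : ∀ i, O i) (d : ∀ i, D i) :
    0 ≤ S.behavior o d := by
  rw [behavior_eq_dot]
  have hpsd : (tensorProj S o d).PosSemidef := by
    have h1 := tensorProj_herm S o d
    have := Matrix.posSemidef_conjTranspose_mul_self (tensorProj S o d)
    rwa [h1.eq, tensorProj_idem] at this
  exact hpsd.re_dotProduct_nonneg S.state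

lemma behavior_sum_one (S : QStrategy O D) (o : ∀ i, O i) :
    ∑ d, S.behavior o d = 1 := by
  simp only [QStrategy.behavior, projBehavior]
  rw [← Complex.re_sum]
  have : (∑ d : ∀ i, D i, ∑ x, ∑ y, (starRingEnd ℂ) (S.state x) *
      (∏ i, S.proj i (o i) (d i) (x i) (y i)) * S.state y)
      = ((∑ x, Complex.normSq (S.state x) : ℝ) : ℂ) := by
    rw [Finset.sum_comm, Complex.ofReal_sum]
    refine Finset.sum_congr rfl fun x _ => ?_
    rw [Finset.sum_comm]
    have hy : ∀ y, (∑ d : ∀ i, D i, (starRingEnd ℂ) (S.state x) *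
        (∏ i, S.proj i (o i) (d i) (x i) (y i)) * S.state y)
        = (starRingEnd ℂ) (S.state x) * (if x = y then 1 else 0) * S.state y := by
      intro y
      rw [← Finset.sum_mul, ← Finset.mul_sum]
      congr 2
      calc ∑ d : ∀ i, D i, ∏ i, S.proj i (o i) (d i) (x i) (y i)
          = ∏ i, ∑ di, S.proj i (o i) di (x i) (y i) :=
            (Fintype.prod_sum (fun i di => S.proj i (o i) di (x i) (y i))).symm
        _ = ∏ i, (if x i = y i then (1:ℂ) else 0) := by
            refine Finset.prod_congr rfl fun i _ => ?_
            calc ∑ di, S.proj i (o i) di (x i) (y i)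
                = (∑ di, S.proj i (o i) di) (x i) (y i) := by
                  rw [Matrix.sum_apply]
              _ = _ := by rw [S.proj_sum]; simp [Matrix.one_apply]
        _ = if x = y then 1 else 0 := by
            rw [Finset.prod_boole]
            simp [funext_iff]
    simp only [hy, mul_ite, ite_mul, mul_one, mul_zero, zero_mul, Finset.sum_ite_eq,
      Finset.mem_univ, if_true, ← Complex.normSq_eq_conj_mul_self]
  rw [this, Complex.ofReal_re, S.state_norm]

end TC

namespace TC

/-- Rank-one projector onto a real vector in ℂ². -/
noncomputable def outerR (u : Fin 2 → ℝ) : Matrix (Fin 2) (Fin 2) ℂ :=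
  Matrix.of fun x y => ((u x * u y : ℝ) : ℂ)

lemma outerR_herm (u : Fin 2 → ℝ) : (outerR u).IsHermitian := by
  ext x y
  simp [outerR, Matrix.conjTranspose_apply, mul_comm, ← Complex.ofReal_mul]

lemma outerR_mul (u v : Fin 2 → ℝ) (c : ℝ) (h : u 0 * v 0 + u 1 * v 1 = c) :
    outerR u * outerR v = Matrix.of fun x y => ((c * (u x * v y) : ℝ) : ℂ) := by
  ext x y
  simp only [Matrix.mul_apply, outerR, Matrix.of_apply, Fin.sum_univ_two,
    ← Complex.ofReal_mul, ← Complex.ofReal_add, Complex.ofReal_inj]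
  linear_combination (u x * v y) * h

lemma outerR_mul_self (u : Fin 2 → ℝ) (h : u 0 ^ 2 + u 1 ^ 2 = 1) :
    outerR u * outerR u = outerR u := by
  rw [outerR_mul u u 1 (by linear_combination h)]
  ext x y
  simp [outerR]

lemma outerR_mul_orth (u v : Fin 2 → ℝ) (h : u 0 * v 0 + u 1 * v 1 = 0) :
    outerR u * outerR v = 0 := by
  rw [outerR_mul u v 0 h]
  ext x y
  simp

/-- The two-outcome measurement in the basis `{u, u^⊥}`. -/
noncomputable def measB (u : Fin 2 → ℝ) : Bool → Matrix (Fin 2) (Fin 2) ℂ :=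
  fun d => if d then outerR ![-(u 1), u 0] else outerR u

lemma measB_herm (u : Fin 2 → ℝ) (d : Bool) : (measB u d).IsHermitian := by
  cases d <;> simp [measB, outerR_herm]

lemma measB_idem (u : Fin 2 → ℝ) (h : u 0 ^ 2 + u 1 ^ 2 = 1) (d : Bool) :
    measB u d * measB u d = measB u d := by
  cases d <;> simp only [measB, if_true, if_false, Bool.false_eq_true]
  · exact outerR_mul_self u h
  · refine outerR_mul_self _ ?_
    simp only [Matrix.cons_val_zero, Matrix.cons_val_one, Matrix.head_cons]
    linear_combination h

lemma measB_orth (u : Fin 2 → ℝ) (d d' : Bool) (hd : d ≠ d') :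
    measB u d * measB u d' = 0 := by
  cases d <;> cases d' <;> simp only [measB, if_true, if_false, Bool.false_eq_true] <;>
    first
      | exact absurd rfl hd
      | refine outerR_mul_orth _ _ ?_ <;>
          simp only [Matrix.cons_val_zero, Matrix.cons_val_one, Matrix.head_cons] <;> ring

lemma measB_sum (u : Fin 2 → ℝ) (h : u 0 ^ 2 + u 1 ^ 2 = 1) :
    ∑ d : Bool, measB u d = 1 := by
  rw [Fintype.sum_bool]
  ext x y
  have hC : ((u 0 : ℂ)) ^ 2 + ((u 1 : ℂ)) ^ 2 = 1 := by exact_mod_cast h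
  fin_cases x <;> fin_cases y <;>
    simp only [measB, if_true, if_false, Matrix.add_apply, outerR, Matrix.of_apply,
      Matrix.cons_val_zero, Matrix.cons_val_one, Matrix.head_cons, Matrix.one_apply,
      Fin.zero_eta, Fin.mk_one, Bool.false_eq_true] <;>
    norm_num <;> push_cast <;>
    first
      | linear_combination hC
      | ring

/-- The maximally entangled two-qubit state. -/
noncomputable def phiPlus : (∀ _ : Fin 2, Fin 2) → ℂ :=
  fun x => if x 0 = x 1 then ((Real.sqrt 2)⁻¹ : ℝ) else 0

lemma sqrt_two_inv_sq : (Real.sqrt 2)⁻¹ * (Real.sqrt 2)⁻¹ = 1 / 2 := by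
  rw [← mul_inv, Real.mul_self_sqrt] <;> norm_num

lemma phiPlus_norm : ∑ x, Complex.normSq (phiPlus x) = 1 := by
  rw [TCAux.sum_pi2]
  simp only [phiPlus, TCAux.piFinTwo_symm_zero, TCAux.piFinTwo_symm_one, apply_ite,
    Complex.normSq_ofReal, Complex.normSq_zero, Fin.sum_univ_two]
  norm_num [sqrt_two_inv_sq]

end TC

namespace TC

/-- A two-party, two-dimensional quantum strategy from a family of unit vectors. -/
noncomputable def chshStrategy (v : Fin 2 → Bool → Fin 2 → ℝ)
    (h : ∀ i o, (v i o 0) ^ 2 + (v i o 1) ^ 2 = 1) :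
    QStrategy (fun _ : Fin 2 => Bool) (fun _ : Fin 2 => Bool) where
  dim := fun _ => 2
  dim_pos := fun _ => by norm_num
  proj := fun i o d => measB (v i o) d
  proj_herm := fun i o d => measB_herm _ d
  proj_idem := fun i o d => measB_idem _ (h i o) d
  proj_orth := fun i o d d' hd => measB_orth _ d d' hd
  proj_sum := fun i o => measB_sum _ (h i o)
  state := phiPlus
  state_norm := phiPlus_norm

/-- Evaluation of the Φ⁺ behavior against two rank-one real projectors. -/
lemma phiPlus_eval (P : ∀ i : Fin 2, Bool → Bool → Matrix (Fin 2) (Fin 2) ℂ)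
    (a b : Fin 2 → ℝ) (o d : Fin 2 → Bool)
    (hA : P 0 (o 0) (d 0) = outerR a) (hB : P 1 (o 1) (d 1) = outerR b) :
    projBehavior (fun _ => 2) P phiPlus o d = (a 0 * b 0 + a 1 * b 1) ^ 2 / 2 := by
  simp only [projBehavior]
  rw [TCAux.sum_pi2]
  simp only [TCAux.sum_pi2 (α := fun _ : Fin 2 => Fin 2)]
  simp only [Fin.prod_univ_two, TCAux.piFinTwo_symm_zero, TCAux.piFinTwo_symm_one,
    hA, hB, phiPlus, outerR, Matrix.of_apply, apply_ite (starRingEnd ℂ), map_zero,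
    Complex.conj_ofReal, Fin.sum_univ_two]
  simp only [if_true, if_false, mul_zero, zero_mul, mul_ite, ite_mul,
    ← Complex.ofReal_mul]
  norm_num
  have h2 : Real.sqrt 2 * Real.sqrt 2 = 2 := Real.mul_self_sqrt (by norm_num)
  linear_combination ((a 0 * b 0 + a 1 * b 1) ^ 2 / 4) * h2

lemma chshStrategy_behavior (v : Fin 2 → Bool → Fin 2 → ℝ)
    (h : ∀ i o, (v i o 0) ^ 2 + (v i o 1) ^ 2 = 1) (o d : Fin 2 → Bool) :
    (chshStrategy v h).behavior o d =
      ((if d 0 then -(v 0 (o 0) 1) else v 0 (o 0) 0) *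
        (if d 1 then -(v 1 (o 1) 1) else v 1 (o 1) 0) +
       (if d 0 then v 0 (o 0) 0 else v 0 (o 0) 1) *
        (if d 1 then v 1 (o 1) 0 else v 1 (o 1) 1)) ^ 2 / 2 := by
  have := phiPlus_eval (chshStrategy v h).proj
    (if d 0 then ![-(v 0 (o 0) 1), v 0 (o 0) 0] else v 0 (o 0))
    (if d 1 then ![-(v 1 (o 1) 1), v 1 (o 1) 0] else v 1 (o 1)) o d
    (by cases hd : d 0 <;> simp [chshStrategy, measB, hd])
    (by cases hd : d 1 <;> simp [chshStrategy, measB, hd])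
  rw [show (chshStrategy v h).behavior o d
      = projBehavior (fun _ => 2) (chshStrategy v h).proj phiPlus o d from rfl, this]
  cases hd0 : d 0 <;> cases hd1 : d 1 <;> simp

end TC

namespace TC

lemma detBehavior_exp {n : ℕ} {O D : Fin n → Type} [∀ i, Fintype (O i)] [∀ i, Fintype (D i)]
    [∀ i, DecidableEq (D i)] (w : (∀ i, O i) → (∀ i, D i) → ℝ) (f : ∀ i, O i → D i) :
    expUtility w (detBehavior f) = ∑ o, w o (fun i => f i (o i)) := by
  unfold expUtility detBehavior
  refine Finset.sum_congr rfl fun o _ => ?_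
  have hd : ∀ d : ∀ i, D i, (∏ i, if d i = f i (o i) then (1:ℝ) else 0)
      = if d = (fun i => f i (o i)) then 1 else 0 := by
    intro d
    rw [Finset.prod_boole]
    simp [funext_iff]
  simp only [hd, ite_mul, one_mul, zero_mul, Finset.sum_ite_eq', Finset.mem_univ, if_true]

/-- The concrete vectors achieving the quantum advantage for `wCHSH`. -/
noncomputable def vCHSH : Fin 2 → Bool → Fin 2 → ℝ := fun i o =>
  if i = 0 then (if o then ![3/5, 4/5] else ![1, 0])
  else (if o then ![12/13, -(5/13)] else ![12/13, 5/13])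

/-- The concrete vectors achieving the quantum advantage for `wAntiCHSH`. -/
noncomputable def vAnti : Fin 2 → Bool → Fin 2 → ℝ := fun i o =>
  if i = 0 then (if o then ![-(4/5), 3/5] else ![0, 1])
  else (if o then ![12/13, -(5/13)] else ![12/13, 5/13])

lemma vCHSH_norm : ∀ i o, (vCHSH i o 0) ^ 2 + (vCHSH i o 1) ^ 2 = 1 := by
  intro i o
  fin_cases i <;> cases o <;> norm_num [vCHSH]

lemma vAnti_norm : ∀ i o, (vAnti i o 0) ^ 2 + (vAnti i o 1) ^ 2 = 1 := by
  intro i o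
  fin_cases i <;> cases o <;> norm_num [vAnti]

lemma expUtility_chsh :
    expUtility wCHSH (chshStrategy vCHSH vCHSH_norm).behavior = 2861/3380 := by
  unfold expUtility
  rw [TCAux.sum_pi2]
  simp only [TCAux.sum_pi2 (α := fun _ : Fin 2 => Bool)]
  simp only [Fintype.sum_bool, chshStrategy_behavior, TCAux.piFinTwo_symm_zero,
    TCAux.piFinTwo_symm_one, wCHSH]
  norm_num [vCHSH]

lemma expUtility_anti :
    expUtility wAntiCHSH (chshStrategy vAnti vAnti_norm).behavior = 2861/3380 := by
  unfold expUtility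
  rw [TCAux.sum_pi2]
  simp only [TCAux.sum_pi2 (α := fun _ : Fin 2 => Bool)]
  simp only [Fintype.sum_bool, chshStrategy_behavior, TCAux.piFinTwo_symm_zero,
    TCAux.piFinTwo_symm_one, wAntiCHSH]
  norm_num [vAnti]

lemma cexp_chsh_le (f : ∀ i : Fin 2, Bool → Bool) :
    expUtility wCHSH (detBehavior f) ≤ 3/4 := by
  rw [detBehavior_exp, TCAux.sum_pi2]
  simp only [Fintype.sum_bool, TCAux.piFinTwo_symm_zero, TCAux.piFinTwo_symm_one, wCHSH]
  rcases Bool.dichotomy (f 0 false) with h1 | h1 <;> rcases Bool.dichotomy (f 0 true) with h2 | h2 <;>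
    rcases Bool.dichotomy (f 1 false) with h3 | h3 <;> rcases Bool.dichotomy (f 1 true) with h4 | h4 <;>
    norm_num [h1, h2, h3, h4]

lemma cexp_anti_le (f : ∀ i : Fin 2, Bool → Bool) :
    expUtility wAntiCHSH (detBehavior f) ≤ 3/4 := by
  rw [detBehavior_exp, TCAux.sum_pi2]
  simp only [Fintype.sum_bool, TCAux.piFinTwo_symm_zero, TCAux.piFinTwo_symm_one, wAntiCHSH]
  rcases Bool.dichotomy (f 0 false) with h1 | h1 <;> rcases Bool.dichotomy (f 0 true) with h2 | h2 <;>
    rcases Bool.dichotomy (f 1 false) with h3 | h3 <;> rcases Bool.dichotomy (f 1 true) with h4 | h4 <;>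
    norm_num [h1, h2, h3, h4]

lemma qset_bddAbove (w : (Fin 2 → Bool) → (Fin 2 → Bool) → ℝ)
    (hw : ∀ o d, w o d ≤ 1/4) :
    BddAbove {x : ℝ | ∃ S : QStrategy (fun _ : Fin 2 => Bool) (fun _ : Fin 2 => Bool),
      x = expUtility w S.behavior} := by
  refine ⟨1, fun x hx => ?_⟩
  obtain ⟨S, rfl⟩ := hx
  unfold expUtility
  calc ∑ o, ∑ d, S.behavior o d * w o d
      ≤ ∑ o : Fin 2 → Bool, ∑ d : Fin 2 → Bool, S.behavior o d * (1/4) := by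
        refine Finset.sum_le_sum fun o _ => Finset.sum_le_sum fun d _ => ?_
        exact mul_le_mul_of_nonneg_left (hw o d) (behavior_nonneg S o d)
    _ = ∑ o : Fin 2 → Bool, (1/4 : ℝ) := by
        refine Finset.sum_congr rfl fun o _ => ?_
        rw [← Finset.sum_mul, behavior_sum_one, one_mul]
    _ = 1 := by
        simp only [Finset.sum_const, Finset.card_univ, nsmul_eq_mul]
        rw [show Fintype.card (Fin 2 → Bool) = 4 by simp]
        norm_num

lemma gapped_of (w : (Fin 2 → Bool) → (Fin 2 → Bool) → ℝ)
    (hw : ∀ o d, w o d ≤ 1/4)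
    (hc : ∀ f : ∀ i : Fin 2, Bool → Bool, expUtility w (detBehavior f) ≤ 3/4)
    (S : QStrategy (fun _ : Fin 2 => Bool) (fun _ : Fin 2 => Bool))
    (hS : expUtility w S.behavior = 2861/3380) :
    Gapped (O := fun _ : Fin 2 => Bool) (D := fun _ : Fin 2 => Bool) w := by
  rw [Gapped, gap, sub_pos]
  have h1 : cValue (O := fun _ : Fin 2 => Bool) (D := fun _ : Fin 2 => Bool) w ≤ 3/4 :=
    ciSup_le hc
  have h2 : (2861/3380 : ℝ) ≤ qValue (O := fun _ : Fin 2 => Bool) (D := fun _ : Fin 2 => Bool) w := by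
    rw [qValue]
    exact le_csSup (qset_bddAbove w hw) ⟨S, hS.symm⟩
  calc cValue (O := fun _ : Fin 2 => Bool) (D := fun _ : Fin 2 => Bool) w
      ≤ 3/4 := h1
    _ < 2861/3380 := by norm_num
    _ ≤ _ := h2

end TC

namespace TC

lemma sum_chsh_eq :
    (fun (o : Fin 2 → Bool) (d : Fin 2 → Bool) => wCHSH o d + wAntiCHSH o d) =
      (fun _ _ => (1/4 : ℝ)) := by
  funext o d
  by_cases h : (o 0 && o 1) = (d 0 != d 1) <;> simp [wCHSH, wAntiCHSH, h]

lemma expUtility_const_of_behavior (p : (Fin 2 → Bool) → (Fin 2 → Bool) → ℝ)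
    (hp : ∀ o, ∑ d, p o d = 1) :
    expUtility (fun _ _ => (1/4 : ℝ)) p = 1 := by
  unfold expUtility
  have : ∀ o : Fin 2 → Bool, ∑ d : Fin 2 → Bool, p o d * (1/4 : ℝ) = 1/4 := by
    intro o
    rw [← Finset.sum_mul, hp, one_mul]
  simp only [this, Finset.sum_const, Finset.card_univ, nsmul_eq_mul]
  rw [show Fintype.card (Fin 2 → Bool) = 4 by simp]
  norm_num

lemma detBehavior_sum_one (f : ∀ i : Fin 2, Bool → Bool) (o : Fin 2 → Bool) :
    ∑ d, detBehavior f o d = 1 := by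
  have hd : ∀ d : ∀ i : Fin 2, Bool, (∏ i, if d i = f i (o i) then (1:ℝ) else 0)
      = if d = (fun i => f i (o i)) then 1 else 0 := by
    intro d
    rw [Finset.prod_boole]
    simp [funext_iff]
  unfold detBehavior
  simp only [hd, Finset.sum_ite_eq', Finset.mem_univ, if_true]

lemma gap_const_zero :
    gap (O := fun _ : Fin 2 => Bool) (D := fun _ : Fin 2 => Bool)
      (fun _ _ => (1/4 : ℝ)) = 0 := by
  have hc : cValue (O := fun _ : Fin 2 => Bool) (D := fun _ : Fin 2 => Bool)
      (fun _ _ => (1/4 : ℝ)) = 1 := by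
    unfold cValue
    have : ∀ f : ∀ i : Fin 2, Bool → Bool,
        expUtility (fun _ _ => (1/4 : ℝ)) (detBehavior f) = 1 := fun f =>
      expUtility_const_of_behavior _ (detBehavior_sum_one f)
    simp only [this, ciSup_const]
  have hq : qValue (O := fun _ : Fin 2 => Bool) (D := fun _ : Fin 2 => Bool)
      (fun _ _ => (1/4 : ℝ)) = 1 := by
    unfold qValue
    have hset : {x : ℝ | ∃ S : QStrategy (fun _ : Fin 2 => Bool) (fun _ : Fin 2 => Bool),
        x = expUtility (fun _ _ => (1/4 : ℝ)) S.behavior} = {1} := by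
      ext x
      constructor
      · rintro ⟨S, rfl⟩
        exact expUtility_const_of_behavior _ (behavior_sum_one S)
      · rintro rfl
        exact ⟨chshStrategy vCHSH vCHSH_norm,
          (expUtility_const_of_behavior _ (behavior_sum_one _)).symm⟩
    rw [hset, csSup_singleton]
  rw [gap, hc, hq, sub_self]

end TC


open TC in
/-- the set of gapped weighted utility arrays is not closed under addition:
`w_CHSH` and `w̄_CHSH` are both gapped, but their sum is the constant `1/4` array, which is
gapless. -/
theorem gapped_not_closed_under_addition :
    Gapped (O := fun _ : Fin 2 => Bool) (D := fun _ : Fin 2 => Bool) wCHSH ∧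
    Gapped (O := fun _ : Fin 2 => Bool) (D := fun _ : Fin 2 => Bool) wAntiCHSH ∧
    (fun (o : Fin 2 → Bool) (d : Fin 2 → Bool) => wCHSH o d + wAntiCHSH o d) =
      (fun _ _ => (1/4 : ℝ)) ∧
    gap (O := fun _ : Fin 2 => Bool) (D := fun _ : Fin 2 => Bool)
      (fun o d => wCHSH o d + wAntiCHSH o d) = 0 := by
  refine ⟨?_, ?_, sum_chsh_eq, ?_⟩
  · refine gapped_of wCHSH (fun o d => ?_) cexp_chsh_le _ expUtility_chsh
    unfold wCHSH
    split <;> norm_num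
  · refine gapped_of wAntiCHSH (fun o d => ?_) cexp_anti_le _ expUtility_anti
    unfold wAntiCHSH
    split <;> norm_num
  · rw [show (fun (o d : Fin 2 → Bool) => wCHSH o d + wAntiCHSH o d)
        = (fun _ _ => (1/4 : ℝ)) from sum_chsh_eq]
    exact gap_const_zero
end

section
/- Let p ∈ [0,1]. The supremum of (1−p)²·a + p(1−p)·b + p(1−p)·c − p²·d over all a, b, c, d ∈ [−1,1] satisfying |arcsin a + arcsin b + arcsin c − arcsin d| ≤ π equals: 1 − 2p² if 0 ≤ p ≤ 1 − 1/√2; √2·(1 − 2p(1−p)) if 1 − 1/√2 ≤ p ≤ 1/√2; and 4p − 2p² − 1 if 1/√2 ≤ p ≤ 1. Moreover this supremum is attained. -/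
/-!
Write `a = sin α`, `b = sin β`, `c = sin γ`, `d = -sin η` with angles in `[-π/2, π/2]`.
Raising all angles towards `π / 2` only increases the objective, so one may assume
`α + β + γ + η = π`. Grouping the objective as
`(1-p)((1-p) sin α + p sin β) + p((1-p) sin γ + p sin η)` and bounding each bracket by the
length of a planar vector, it is at most
`(1-p) √(K - 2p(1-p)t) + p √(K + 2p(1-p)t)` with `K = (1-p)² + p²` and `t = cos (α + β)`.
Maximising over `t ∈ [-1, 1]` gives the three regimes: the endpoint `t = -1` for small `p`,
Cauchy–Schwarz in the middle, and the endpoint `t = 1` (by the symmetry `p ↦ 1 - p`) for large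
`p`. The bound is attained by correlations `cos x, cos y, cos z, cos (x + y + z)` of planar
unit vectors, for which the arcsine constraint holds with equality.
-/

open Real Set

noncomputable def chshOptimum (p : ℝ) : ℝ :=
  if p ≤ 1 - 1 / √2 then 1 - 2 * p ^ 2
  else if p ≤ 1 / √2 then √2 * (1 - 2 * p * (1 - p))
  else 4 * p - 2 * p ^ 2 - 1

def chshValues (p : ℝ) : Set ℝ :=
  {x | ∃ a b c d : ℝ, a ∈ Icc (-1 : ℝ) 1 ∧ b ∈ Icc (-1 : ℝ) 1 ∧
    c ∈ Icc (-1 : ℝ) 1 ∧ d ∈ Icc (-1 : ℝ) 1 ∧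
    |arcsin a + arcsin b + arcsin c - arcsin d| ≤ π ∧
    x = (1 - p) ^ 2 * a + p * (1 - p) * b + p * (1 - p) * c - p ^ 2 * d}

lemma one_le_two_mul_sq_of_one_div_sqrt_two_le {x : ℝ} (h : 1 / √2 ≤ x) :
    1 ≤ 2 * x ^ 2 := by
  have hsq : (1 / √2) ^ 2 ≤ x ^ 2 := pow_le_pow_left₀ (by positivity) h 2
  rw [div_pow, sq_sqrt zero_le_two] at hsq
  linarith

lemma two_mul_sq_le_one_of_le_one_div_sqrt_two {x : ℝ} (h0 : 0 ≤ x) (h : x ≤ 1 / √2) :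
    2 * x ^ 2 ≤ 1 := by
  have hsq : x ^ 2 ≤ (1 / √2) ^ 2 := pow_le_pow_left₀ h0 h 2
  rw [div_pow, sq_sqrt zero_le_two] at hsq
  linarith

lemma mul_sin_add_mul_sin_le_sqrt (p q u v : ℝ) :
    q * sin u + p * sin v ≤ √(q ^ 2 + p ^ 2 - 2 * p * q * cos (u + v)) := by
  refine (le_abs_self _).trans (abs_le_sqrt ?_)
  rw [cos_add]
  nlinarith [sq_nonneg (q * cos u - p * cos v), sin_sq_add_cos_sq u, sin_sq_add_cos_sq v]

noncomputable def chshProfile (p t : ℝ) : ℝ :=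
  (1 - p) * √((1 - p) ^ 2 + p ^ 2 - 2 * p * (1 - p) * t) +
    p * √((1 - p) ^ 2 + p ^ 2 + 2 * p * (1 - p) * t)

section Profile

variable {p t : ℝ}

lemma chshProfile_one_sub_neg : chshProfile (1 - p) (-t) = chshProfile p t := by
  unfold chshProfile
  rw [add_comm]
  congr 2 <;> ring_nf

lemma chshProfile_radicands_nonneg (hp0 : 0 ≤ p) (hp1 : p ≤ 1) (ht : t ∈ Icc (-1 : ℝ) 1) :
    0 ≤ (1 - p) ^ 2 + p ^ 2 - 2 * p * (1 - p) * t ∧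
      0 ≤ (1 - p) ^ 2 + p ^ 2 + 2 * p * (1 - p) * t := by
  have hpq : 0 ≤ p * (1 - p) := mul_nonneg hp0 (by linarith)
  constructor <;> nlinarith [sq_nonneg (1 - 2 * p), ht.1, ht.2]

lemma chshProfile_le_sqrt_two_mul (hp0 : 0 ≤ p) (hp1 : p ≤ 1) (ht : t ∈ Icc (-1 : ℝ) 1) :
    chshProfile p t ≤ √2 * (1 - 2 * p * (1 - p)) := by
  obtain ⟨hs, hr⟩ := chshProfile_radicands_nonneg hp0 hp1 ht
  unfold chshProfile
  set s := √((1 - p) ^ 2 + p ^ 2 - 2 * p * (1 - p) * t)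
  set r := √((1 - p) ^ 2 + p ^ 2 + 2 * p * (1 - p) * t)
  have hs2 : s ^ 2 = _ := sq_sqrt hs
  have hr2 : r ^ 2 = _ := sq_sqrt hr
  have hK : 0 ≤ 1 - 2 * p * (1 - p) := by nlinarith [sq_nonneg (1 - 2 * p)]
  -- Cauchy–Schwarz: `s ^ 2 + r ^ 2 = 2 ((1 - p) ^ 2 + p ^ 2)`
  have hcs : ((1 - p) * s + p * r) ^ 2 ≤ (√2 * (1 - 2 * p * (1 - p))) ^ 2 := by
    rw [mul_pow, sq_sqrt zero_le_two]
    nlinarith [sq_nonneg ((1 - p) * r - p * s)]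
  exact le_of_abs_le (abs_le_of_sq_le_sq hcs (by positivity))

lemma chshProfile_le_of_one_le_two_mul_sq (hp0 : 0 ≤ p) (hp1 : p ≤ 1)
    (hp : 1 ≤ 2 * (1 - p) ^ 2) (ht : t ∈ Icc (-1 : ℝ) 1) :
    chshProfile p t ≤ 1 - 2 * p ^ 2 := by
  obtain ⟨hs, hr⟩ := chshProfile_radicands_nonneg hp0 hp1 ht
  unfold chshProfile
  set s := √((1 - p) ^ 2 + p ^ 2 - 2 * p * (1 - p) * t)
  set r := √((1 - p) ^ 2 + p ^ 2 + 2 * p * (1 - p) * t)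
  have hs2 : s ^ 2 = _ := sq_sqrt hs
  have hr2 : r ^ 2 = _ := sq_sqrt hr
  have hqp : 0 < 1 - 2 * p := by nlinarith
  -- the bound is attained at `t = -1`, where `s = 1` and `r = 1 - 2 p`
  have key : 2 * (1 - 2 * p) * (1 - 2 * p ^ 2 - ((1 - p) * s + p * r)) =
      (1 - p) * (1 - 2 * p) * (s - 1) ^ 2 + p * (r - (1 - 2 * p)) ^ 2 +
        2 * (p * (1 - p)) * (2 * (1 - p) ^ 2 - 1) * (1 + t) := by
    linear_combination (-((1 - p) * (1 - 2 * p))) * hs2 + (-p) * hr2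
  have hsos : 0 ≤ (1 - 2 * p) * (1 - 2 * p ^ 2 - ((1 - p) * s + p * r)) := by
    nlinarith [mul_nonneg (mul_nonneg (sub_nonneg.2 hp1) hqp.le) (sq_nonneg (s - 1)),
      mul_nonneg hp0 (sq_nonneg (r - (1 - 2 * p))),
      mul_nonneg (mul_nonneg (mul_nonneg hp0 (sub_nonneg.2 hp1)) (sub_nonneg.2 hp))
        (by linarith [ht.1] : (0 : ℝ) ≤ 1 + t)]
  linarith [(mul_nonneg_iff_of_pos_left hqp).mp hsos]

lemma chshProfile_le_chshOptimum (hp0 : 0 ≤ p) (hp1 : p ≤ 1) (ht : t ∈ Icc (-1 : ℝ) 1) :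
    chshProfile p t ≤ chshOptimum p := by
  unfold chshOptimum
  split_ifs with h₁ h₂
  · exact chshProfile_le_of_one_le_two_mul_sq hp0 hp1
      (one_le_two_mul_sq_of_one_div_sqrt_two_le (by linarith)) ht
  · exact chshProfile_le_sqrt_two_mul hp0 hp1 ht
  · rw [← chshProfile_one_sub_neg]
    have h := chshProfile_le_of_one_le_two_mul_sq (p := 1 - p) (t := -t) (by linarith)
      (by linarith) (by simpa using one_le_two_mul_sq_of_one_div_sqrt_two_le (not_le.1 h₂).le)
      ⟨by linarith [ht.2], by linarith [ht.1]⟩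
    linarith

end Profile

lemma weighted_sum_sin_le_chshOptimum_of_sum_eq_pi {p α β γ η : ℝ} (hp0 : 0 ≤ p)
    (hp1 : p ≤ 1) (hsum : α + β + γ + η = π) :
    (1 - p) ^ 2 * sin α + p * (1 - p) * sin β + p * (1 - p) * sin γ + p ^ 2 * sin η ≤
      chshOptimum p := by
  have hαβ := mul_sin_add_mul_sin_le_sqrt p (1 - p) α β
  have hγη := mul_sin_add_mul_sin_le_sqrt p (1 - p) γ η
  rw [show γ + η = π - (α + β) by linarith, cos_pi_sub] at hγη
  calc (1 - p) ^ 2 * sin α + p * (1 - p) * sin β + p * (1 - p) * sin γ + p ^ 2 * sin η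
      = (1 - p) * ((1 - p) * sin α + p * sin β) + p * ((1 - p) * sin γ + p * sin η) := by ring
    _ ≤ chshProfile p (cos (α + β)) := by
      unfold chshProfile
      gcongr
      exact hγη.trans_eq (by ring_nf)
    _ ≤ chshOptimum p :=
      chshProfile_le_chshOptimum hp0 hp1 ⟨neg_one_le_cos _, cos_le_one _⟩

lemma weighted_sum_sin_le_chshOptimum {p α β γ η : ℝ} (hp0 : 0 ≤ p) (hp1 : p ≤ 1)
    (hα : α ∈ Icc (-(π / 2)) (π / 2)) (hβ : β ∈ Icc (-(π / 2)) (π / 2))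
    (hγ : γ ∈ Icc (-(π / 2)) (π / 2)) (hη : η ∈ Icc (-(π / 2)) (π / 2))
    (hsum : α + β + γ + η ≤ π) :
    (1 - p) ^ 2 * sin α + p * (1 - p) * sin β + p * (1 - p) * sin γ + p ^ 2 * sin η ≤
      chshOptimum p := by
  -- move every angle the same fraction `l` of its way to `π / 2`, so that they sum to `π`
  set S := α + β + γ + η
  have hS : 0 < 2 * π - S := by linarith [pi_pos]
  set l := (π - S) / (2 * π - S)
  have hl0 : 0 ≤ l := div_nonneg (by linarith) hS.le
  have hl1 : l ≤ 1 := (div_le_one hS).2 (by linarith [hα.1, hβ.1, hγ.1, hη.1])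
  have shift : ∀ θ ∈ Icc (-(π / 2)) (π / 2), sin θ ≤ sin (θ + l * (π / 2 - θ)) :=
    fun θ hθ ↦ sin_le_sin_of_le_of_le_pi_div_two hθ.1 (by nlinarith [hθ.2])
      (by nlinarith [hθ.2])
  have hsum' : (α + l * (π / 2 - α)) + (β + l * (π / 2 - β)) + (γ + l * (π / 2 - γ)) +
      (η + l * (π / 2 - η)) = π := by
    have : l * (2 * π - S) = π - S := div_mul_cancel₀ _ hS.ne'
    linarith
  have hpq : 0 ≤ p * (1 - p) := mul_nonneg hp0 (by linarith)
  have := weighted_sum_sin_le_chshOptimum_of_sum_eq_pi hp0 hp1 hsum'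
  nlinarith [mul_le_mul_of_nonneg_left (shift α hα) (sq_nonneg (1 - p)),
    mul_le_mul_of_nonneg_left (shift β hβ) hpq, mul_le_mul_of_nonneg_left (shift γ hγ) hpq,
    mul_le_mul_of_nonneg_left (shift η hη) (sq_nonneg p)]

lemma le_chshOptimum_of_mem_chshValues {p x : ℝ} (hp0 : 0 ≤ p) (hp1 : p ≤ 1)
    (hx : x ∈ chshValues p) : x ≤ chshOptimum p := by
  obtain ⟨a, b, c, d, ha, hb, hc, hd, hsum, rfl⟩ := hx
  have mem (y : ℝ) : arcsin y ∈ Icc (-(π / 2)) (π / 2) :=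
    ⟨neg_pi_div_two_le_arcsin y, arcsin_le_pi_div_two y⟩
  have h := weighted_sum_sin_le_chshOptimum (η := -arcsin d) hp0 hp1 (mem a) (mem b) (mem c)
    ⟨by linarith [(mem d).2], by linarith [(mem d).1]⟩ (by linarith [(abs_le.1 hsum).2])
  rwa [sin_neg, sin_arcsin ha.1 ha.2, sin_arcsin hb.1 hb.2, sin_arcsin hc.1 hc.2,
    sin_arcsin hd.1 hd.2, mul_neg, ← sub_eq_add_neg] at h

lemma Real.arcsin_cos {x : ℝ} (hx₀ : 0 ≤ x) (hx₁ : x ≤ π) :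
    arcsin (cos x) = π / 2 - x := by
  have := arccos_cos hx₀ hx₁
  rw [arccos_eq_pi_div_two_sub_arcsin] at this
  linarith

lemma cos_mem_chshValues (p : ℝ) {x y z : ℝ} (hx : 0 ≤ x) (hy : 0 ≤ y) (hz : 0 ≤ z)
    (hxyz : x + y + z ≤ π) :
    (1 - p) ^ 2 * cos x + p * (1 - p) * cos y + p * (1 - p) * cos z - p ^ 2 * cos (x + y + z) ∈
      chshValues p := by
  have mem (θ : ℝ) : cos θ ∈ Icc (-1 : ℝ) 1 := ⟨neg_one_le_cos θ, cos_le_one θ⟩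
  refine ⟨_, _, _, _, mem x, mem y, mem z, mem (x + y + z), ?_, rfl⟩
  rw [arcsin_cos hx (by linarith), arcsin_cos hy (by linarith), arcsin_cos hz (by linarith),
    arcsin_cos (by linarith) hxyz]
  ring_nf
  rw [abs_of_pos pi_pos]

lemma arccos_add_two_mul_arccos_le_pi {a b : ℝ} (hb₀ : 0 ≤ b) (hb₁ : b ≤ 1)
    (hab : 1 - 2 * b ^ 2 ≤ a) : arccos a + 2 * arccos b ≤ π := by
  have hy : arccos b ≤ π / 2 := arccos_le_pi_div_two.2 hb₀
  have hcos : cos (π - 2 * arccos b) = 1 - 2 * b ^ 2 := by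
    rw [cos_pi_sub, cos_two_mul, cos_arccos (by linarith) hb₁]
    ring
  have := arccos_le_arccos (hcos.symm ▸ hab)
  rw [arccos_cos (by linarith) (by linarith [arccos_nonneg b])] at this
  linarith

lemma cos_arccos_add_two_mul_arccos {a b : ℝ} (ha : a ∈ Icc (-1 : ℝ) 1)
    (hb : b ∈ Icc (-1 : ℝ) 1) :
    cos (arccos a + 2 * arccos b) =
      a * (2 * b ^ 2 - 1) - 2 * b * (√(1 - a ^ 2) * √(1 - b ^ 2)) := by
  rw [cos_add, cos_two_mul, sin_two_mul, cos_arccos ha.1 ha.2, cos_arccos hb.1 hb.2,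
    sin_arccos, sin_arccos]
  ring

lemma mem_chshValues_of_arccos (p : ℝ) {a b : ℝ} (ha : a ∈ Icc (-1 : ℝ) 1) (hb₀ : 0 ≤ b)
    (hb₁ : b ≤ 1) (hab : 1 - 2 * b ^ 2 ≤ a) :
    (1 - p) ^ 2 * a + 2 * p * (1 - p) * b -
        p ^ 2 * (a * (2 * b ^ 2 - 1) - 2 * b * (√(1 - a ^ 2) * √(1 - b ^ 2))) ∈
      chshValues p := by
  have hb : b ∈ Icc (-1 : ℝ) 1 := ⟨by linarith, hb₁⟩
  have h := cos_mem_chshValues p (arccos_nonneg a) (arccos_nonneg b) (arccos_nonneg b)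
    (by linarith [arccos_add_two_mul_arccos_le_pi hb₀ hb₁ hab])
  rw [add_assoc (arccos a), ← two_mul, cos_arccos_add_two_mul_arccos ha hb,
    cos_arccos ha.1 ha.2, cos_arccos hb.1 hb.2] at h
  convert h using 1
  ring

lemma sqrt_two_mul_mem_chshValues {p : ℝ} (hp : 2 * p ^ 2 ≤ 1) (hq : 2 * (1 - p) ^ 2 ≤ 1) :
    √2 * (1 - 2 * p * (1 - p)) ∈ chshValues p := by
  have hp0 : 0 < p := by nlinarith
  have hq0 : 0 < 1 - p := by nlinarith
  have hc2 : √2 ^ 2 = 2 := sq_sqrt zero_le_two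
  have hcp : √2 * p ≤ 1 := by nlinarith [sqrt_nonneg 2, sq_nonneg (√2 * p - 1)]
  -- the correlations of the equality case of the upper bound; `M ≥ 0` is the middle regime
  set a := √2 * (3 * (1 - p) ^ 2 - p ^ 2) / (4 * (1 - p) ^ 2) with ha
  set b := √2 * (p ^ 2 + (1 - p) ^ 2) / (4 * (p * (1 - p))) with hb
  set M := (1 - 2 * p ^ 2) * (1 - 2 * (1 - p) ^ 2)
  have hM : 0 ≤ M := mul_nonneg (by linarith) (by linarith)
  have hb_sq : b ^ 2 = (p ^ 2 + (1 - p) ^ 2) ^ 2 / (8 * (p * (1 - p)) ^ 2) := by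
    rw [hb, div_pow, mul_pow, hc2]
    field_simp
    ring
  have h1a : 1 - a ^ 2 = M / (8 * (1 - p) ^ 4) := by
    rw [ha, div_pow, mul_pow, hc2]
    field_simp
    ring
  have h1b : 1 - b ^ 2 = M / (8 * p ^ 2 * (1 - p) ^ 2) := by
    rw [hb_sq]
    field_simp
    ring
  have h1a₀ : 0 ≤ 1 - a ^ 2 := h1a ▸ by positivity
  have h1b₀ : 0 ≤ 1 - b ^ 2 := h1b ▸ by positivity
  have hab : 1 - 2 * b ^ 2 ≤ a := by
    have hN : 0 ≤ √2 * p ^ 2 * (3 * (1 - p) ^ 2 - p ^ 2) + (1 - 2 * p) ^ 2 := by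
      rcases le_total 0 (3 * (1 - p) ^ 2 - p ^ 2) with h | h
      · positivity
      · nlinarith [mul_nonneg (mul_nonneg (sub_nonneg.2 hcp) hp0.le) (neg_nonneg.2 h),
          mul_nonneg hq0.le (by linarith : 0 ≤ 1 - 2 * p ^ 2)]
    have : a - (1 - 2 * b ^ 2) = (√2 * p ^ 2 * (3 * (1 - p) ^ 2 - p ^ 2) + (1 - 2 * p) ^ 2) /
        (4 * (p * (1 - p)) ^ 2) := by
      rw [hb_sq, ha]
      field_simp
      ring
    linarith [this ▸ (by positivity : 0 ≤ _ / (4 * (p * (1 - p)) ^ 2))]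
  have hsin : √(1 - a ^ 2) * √(1 - b ^ 2) = M / (8 * p * (1 - p) ^ 3) := by
    rw [← sqrt_mul h1a₀, h1a, h1b,
      show M / (8 * (1 - p) ^ 4) * (M / (8 * p ^ 2 * (1 - p) ^ 2)) =
        (M / (8 * p * (1 - p) ^ 3)) ^ 2 by field_simp, sqrt_sq (by positivity)]
  have h := mem_chshValues_of_arccos p
    (abs_le.1 ((sq_le_one_iff_abs_le_one a).1 (by linarith))) (by positivity)
    (by nlinarith [sq_nonneg (b - 1)]) hab
  rw [hsin, hb_sq, ha, hb] at h
  convert h using 1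
  field_simp
  ring

lemma chshOptimum_mem_chshValues (p : ℝ) : chshOptimum p ∈ chshValues p := by
  unfold chshOptimum
  split_ifs with h₁ h₂
  · convert cos_mem_chshValues p le_rfl le_rfl le_rfl (by linarith [pi_pos]) using 1
    simp only [add_zero, cos_zero, mul_one]
    ring
  · have hc : 1 / √2 < 1 := (div_lt_one (by positivity)).2 one_lt_sqrt_two
    have hp : 2 * p ^ 2 ≤ 1 := two_mul_sq_le_one_of_le_one_div_sqrt_two (by linarith) h₂
    have hq : 2 * (1 - p) ^ 2 ≤ 1 :=
      two_mul_sq_le_one_of_le_one_div_sqrt_two (by linarith) (by linarith)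
    exact sqrt_two_mul_mem_chshValues hp hq
  · convert cos_mem_chshValues p pi_pos.le le_rfl le_rfl (by simp) using 1
    simp only [add_zero, cos_pi, cos_zero, mul_neg, mul_one, sub_neg_eq_add]
    ring

/-- for `p ∈ [0,1]`, the maximum of
`(1−p)²a + p(1−p)b + p(1−p)c − p²d` over `a,b,c,d ∈ [−1,1]` with
`|arcsin a + arcsin b + arcsin c − arcsin d| ≤ π` is `1 − 2p²` for `0 ≤ p ≤ 1 − 1/√2`,
`√2(1 − 2p(1−p))` for `1 − 1/√2 ≤ p ≤ 1/√2`, and `4p − 2p² − 1` for `1/√2 ≤ p ≤ 1`;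
moreover the supremum is attained. -/
theorem chsh_correlation_optimum (p : ℝ) (hp0 : 0 ≤ p) (hp1 : p ≤ 1) :
    IsGreatest
      {x : ℝ | ∃ a b c d : ℝ,
        a ∈ Set.Icc (-1 : ℝ) 1 ∧ b ∈ Set.Icc (-1 : ℝ) 1 ∧
        c ∈ Set.Icc (-1 : ℝ) 1 ∧ d ∈ Set.Icc (-1 : ℝ) 1 ∧
        |Real.arcsin a + Real.arcsin b + Real.arcsin c - Real.arcsin d| ≤ Real.pi ∧
        x = (1 - p) ^ 2 * a + p * (1 - p) * b + p * (1 - p) * c - p ^ 2 * d}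
      (if p ≤ 1 - 1 / Real.sqrt 2 then 1 - 2 * p ^ 2
       else if p ≤ 1 / Real.sqrt 2 then Real.sqrt 2 * (1 - 2 * p * (1 - p))
       else 4 * p - 2 * p ^ 2 - 1) :=
  ⟨chshOptimum_mem_chshValues p, fun _ hx ↦ le_chshOptimum_of_mem_chshValues hp0 hp1 hx⟩
end

section
/- Consider a two-party TC setting with O_1 = O_2 = D_1 = D_2 = {0,1} (a (2,2,2) problem). If a quantum strategy is degenerate — meaning that for some party i and some observation o_i, the measurement {Π_i^{(0|o_i)}, Π_i^{(1|o_i)}} consists of the zero operator and the identity operator — then its quantum behavior is a classical behavior, i.e., a convex combination of the 16 deterministic behaviors. Moreover, for any degenerate quantum strategy S_q, any deterministic strategy S_d, and any efficiencies η_1, η_2 ∈ [0,1], the {η_i}-lossy behavior of (S_q, S_d) is also a classical behavior. -/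
open scoped BigOperators

namespace TCAux
open Matrix TC

lemma conjT_comm {X Y : Type} (M : Matrix X Y ℂ) : (Mᴴ)ᵀ = (Mᵀ)ᴴ := by
  ext i j; simp [conjTranspose_apply, transpose_apply]

noncomputable def Tr {X Y : Type} [Fintype X] [Fintype Y]
    (M : Matrix X Y ℂ) (P : Matrix X X ℂ) (R : Matrix Y Y ℂ) : ℝ :=
  (trace (Mᴴ * P * M * Rᵀ)).re

lemma trace_self_re_nonneg {X Y : Type} [Fintype X] [Fintype Y] (N : Matrix X Y ℂ) :
    0 ≤ (trace (Nᴴ * N)).re := by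
  have h : trace (Nᴴ * N) = ∑ j, ∑ i, (starRingEnd ℂ) (N i j) * N i j := by
    simp [trace, Matrix.mul_apply, Matrix.diag, Matrix.conjTranspose_apply]
  rw [h]
  simp only [Complex.re_sum]
  apply Finset.sum_nonneg; intro j _
  apply Finset.sum_nonneg; intro i _
  rw [mul_comm, Complex.mul_conj]
  simp [Complex.normSq_nonneg]

lemma Tr_nonneg {X Y : Type} [Fintype X] [Fintype Y]
    (M : Matrix X Y ℂ) (P : Matrix X X ℂ) (R : Matrix Y Y ℂ)
    (hP : Pᴴ = P) (hP2 : P * P = P) (hR : Rᴴ = R) (hR2 : R * R = R) :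
    0 ≤ Tr M P R := by
  have hRt : (Rᵀ)ᴴ = Rᵀ := by
    ext i j
    have := congrFun (congrFun hR j) i
    simp only [conjTranspose_apply, transpose_apply] at this ⊢
    exact this
  have key : (P * M * Rᵀ)ᴴ * (P * M * Rᵀ) = Rᵀ * (Mᴴ * P * M * Rᵀ) := by
    rw [conjTranspose_mul, conjTranspose_mul, hRt, hP]
    simp only [Matrix.mul_assoc]
    rw [← Matrix.mul_assoc P P, hP2]
  have h2 : trace ((P * M * Rᵀ)ᴴ * (P * M * Rᵀ)) = trace (Mᴴ * P * M * Rᵀ) := by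
    rw [key, trace_mul_comm]
    have hRR : Rᵀ * Rᵀ = Rᵀ := by rw [← transpose_mul, hR2]
    have : Mᴴ * P * M * Rᵀ * Rᵀ = Mᴴ * P * M * Rᵀ := by
      simp only [Matrix.mul_assoc, hRR]
    rw [this]
  rw [Tr, ← h2]
  exact trace_self_re_nonneg _

lemma Tr_swap {X Y : Type} [Fintype X] [Fintype Y]
    (M : Matrix X Y ℂ) (P : Matrix X X ℂ) (R : Matrix Y Y ℂ) :
    Tr M P R = Tr Mᵀ R P := by
  unfold Tr
  congr 1
  calc trace (Mᴴ * P * M * Rᵀ) = trace ((Mᴴ * P * M * Rᵀ)ᵀ) := (trace_transpose _).symm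
    _ = trace (R * (Mᵀ * (Pᵀ * (Mᵀ)ᴴ))) := by
        rw [transpose_mul, transpose_mul, transpose_mul, conjT_comm, transpose_transpose]
    _ = trace ((Mᵀ * Pᵀ) * (Mᵀ)ᴴ * R) := by
        rw [trace_mul_comm]
        congr 1
        simp only [Matrix.mul_assoc]
    _ = trace ((Mᵀ)ᴴ * R * (Mᵀ * Pᵀ)) := (trace_mul_cycle _ _ _).symm
    _ = trace ((Mᵀ)ᴴ * R * Mᵀ * Pᵀ) := by rw [Matrix.mul_assoc ((Mᵀ)ᴴ * R)]

lemma Tr_zero_left {X Y : Type} [Fintype X] [Fintype Y]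
    (M : Matrix X Y ℂ) (R : Matrix Y Y ℂ) : Tr M 0 R = 0 := by
  simp [Tr]

lemma Tr_add_right {X Y : Type} [Fintype X] [Fintype Y]
    (M : Matrix X Y ℂ) (P : Matrix X X ℂ) (R R' : Matrix Y Y ℂ) :
    Tr M P (R + R') = Tr M P R + Tr M P R' := by
  simp [Tr, transpose_add, Matrix.mul_add]

lemma Tr_sum_left {X Y ι : Type} [Fintype X] [Fintype Y]
    (M : Matrix X Y ℂ) (s : Finset ι) (P : ι → Matrix X X ℂ) (R : Matrix Y Y ℂ) :
    ∑ j ∈ s, Tr M (P j) R = Tr M (∑ j ∈ s, P j) R := by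
  simp only [Tr, Matrix.sum_mul, Matrix.mul_sum, trace_sum, Complex.re_sum]

lemma Tr_one_one {X Y : Type} [Fintype X] [Fintype Y] [DecidableEq X] [DecidableEq Y]
    (M : Matrix X Y ℂ) : Tr M 1 1 = (trace (Mᴴ * M)).re := by
  simp [Tr]

def bfun (a b : Bool) : Bool → Bool := fun x => bif x then b else a

def bfunEquiv : Bool × Bool ≃ (Bool → Bool) where
  toFun p := bfun p.1 p.2
  invFun f := (f false, f true)
  left_inv p := rfl
  right_inv f := by funext x; cases x <;> rfl

lemma sum_boolfun {M : Type} [AddCommMonoid M] (g : (Bool → Bool) → M) :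
    ∑ f, g f = g (bfun false false) + g (bfun false true) + g (bfun true false) +
      g (bfun true true) := by
  rw [← Equiv.sum_comp bfunEquiv g, Fintype.sum_prod_type]
  simp [Fintype.sum_bool, bfunEquiv]
  show g (bfun true true) + g (bfun true false) + (g (bfun false true) + g (bfun false false)) = _
  abel

lemma core {X Y : Type} [Fintype X] [Fintype Y] [DecidableEq X] [DecidableEq Y]
    (M : Matrix X Y ℂ) (A : Bool → Bool → Matrix X X ℂ) (B : Bool → Bool → Matrix Y Y ℂ)
    (hAh : ∀ a c, (A a c)ᴴ = A a c) (hA2 : ∀ a c, A a c * A a c = A a c)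
    (hAsum : ∀ a, A a false + A a true = 1)
    (hBh : ∀ b d, (B b d)ᴴ = B b d) (hB2 : ∀ b d, B b d * B b d = B b d)
    (hBsum : ∀ b, B b false + B b true = 1)
    (hM : (trace (Mᴴ * M)).re = 1)
    (hdeg : ∃ a c, A a c = 0 ∨ A a c = 1) :
    ∃ μ : (Bool → Bool) → (Bool → Bool) → ℝ, (∀ f g, 0 ≤ μ f g) ∧
      (∑ f, ∑ g, μ f g) = 1 ∧
      ∀ a b c d, Tr M (A a c) (B b d) =
        ∑ f, ∑ g, μ f g * ((if c = f a then (1:ℝ) else 0) * (if d = g b then (1:ℝ) else 0)) := by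
  obtain ⟨a₀, c₀, hdeg⟩ := hdeg
  have htriv : ∀ c, A a₀ c = 0 ∨ A a₀ c = 1 := by
    intro c
    have hs := hAsum a₀
    rcases hdeg with h | h
    · cases c₀
      · rw [h, zero_add] at hs
        cases c
        · exact Or.inl h
        · exact Or.inr hs
      · rw [h, add_zero] at hs
        cases c
        · exact Or.inr hs
        · exact Or.inl h
    · cases c₀
      · rw [h] at hs
        cases c
        · exact Or.inr h
        · exact Or.inl (add_eq_left.mp hs)
      · rw [h] at hs
        cases c
        · exact Or.inl (add_eq_right.mp hs)
        · exact Or.inr h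
  set Q : (Bool → Bool) → Matrix X X ℂ := fun f => A false (f false) * A true (f true) with hQdef
  have hQ : ∀ f, Q f = 0 ∨ ((Q f)ᴴ = Q f ∧ Q f * Q f = Q f) := by
    intro f
    cases a₀ with
    | false =>
      rcases htriv (f false) with h | h
      · left; rw [hQdef]; simp only; rw [h, Matrix.zero_mul]
      · right
        have hqf : Q f = A true (f true) := by rw [hQdef]; simp only; rw [h, Matrix.one_mul]
        rw [hqf]; exact ⟨hAh _ _, hA2 _ _⟩
    | true =>
      rcases htriv (f true) with h | h
      · left; rw [hQdef]; simp only; rw [h, Matrix.mul_zero]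
      · right
        have hqf : Q f = A false (f false) := by rw [hQdef]; simp only; rw [h, Matrix.mul_one]
        rw [hqf]; exact ⟨hAh _ _, hA2 _ _⟩
  have hQsum_all : ∑ f, Q f = 1 := by
    rw [sum_boolfun]
    have : Q (bfun false false) + Q (bfun false true) + Q (bfun true false) + Q (bfun true true)
        = (A false false + A false true) * (A true false + A true true) := by
      simp only [hQdef, bfun, Bool.cond_false, Bool.cond_true]
      noncomm_ring
    rw [this, hAsum, hAsum, one_mul]
  have hQcond : ∀ a c, (∑ f, if c = f a then Q f else 0) = A a c := by
    intro a c
    rw [sum_boolfun]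
    cases a <;> cases c <;>
        simp only [hQdef, bfun, Bool.cond_false, Bool.cond_true, reduceIte, Bool.false_eq_true,
          Bool.true_eq_false, if_false, add_zero, zero_add]
    · rw [← Matrix.mul_add, hAsum, Matrix.mul_one]
    · rw [← Matrix.mul_add, hAsum, Matrix.mul_one]
    · rw [← Matrix.add_mul, hAsum, Matrix.one_mul]
    · rw [← Matrix.add_mul, hAsum, Matrix.one_mul]
  set q : (Bool → Bool) → Bool → Bool → ℝ := fun f b d => Tr M (Q f) (B b d) with hqdef
  set w : (Bool → Bool) → ℝ := fun f => Tr M (Q f) 1 with hwdef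
  have hq_nonneg : ∀ f b d, 0 ≤ q f b d := by
    intro f b d
    rcases hQ f with h | ⟨h1, h2⟩
    · rw [hqdef]; simp only; rw [h, Tr_zero_left]
    · exact Tr_nonneg M _ _ h1 h2 (hBh b d) (hB2 b d)
  have hw_nonneg : ∀ f, 0 ≤ w f := by
    intro f
    rcases hQ f with h | ⟨h1, h2⟩
    · rw [hwdef]; simp only; rw [h, Tr_zero_left]
    · exact Tr_nonneg M _ _ h1 h2 (by simp) (by simp)
  have hqw : ∀ f b, q f b false + q f b true = w f := by
    intro f b
    rw [hqdef, hwdef]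
    simp only
    rw [← Tr_add_right, hBsum]
  have hq0 : ∀ f, w f = 0 → ∀ b d, q f b d = 0 := by
    intro f hw b d
    have h1 := hqw f b
    have h2 := hq_nonneg f b false
    have h3 := hq_nonneg f b true
    cases d <;> linarith [hw ▸ h1]
  refine ⟨fun f g => if w f = 0 then 0 else q f false (g false) * q f true (g true) / w f,
    ?_, ?_, ?_⟩
  · intro f g
    dsimp only
    by_cases hw : w f = 0
    · simp [hw]
    · rw [if_neg hw]
      exact div_nonneg (mul_nonneg (hq_nonneg _ _ _) (hq_nonneg _ _ _)) (hw_nonneg f)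
  · have hinner : ∀ f, ∑ g : Bool → Bool,
        (if w f = 0 then 0 else q f false (g false) * q f true (g true) / w f) = w f := by
      intro f
      by_cases hw : w f = 0
      · simp [hw]
      · simp only [if_neg hw]
        rw [sum_boolfun (fun g => q f false (g false) * q f true (g true) / w f)]
        simp only [bfun, Bool.cond_false, Bool.cond_true]
        rw [← add_div, ← add_div, ← add_div]
        have : q f false false * q f true false + q f false false * q f true true +
            q f false true * q f true false + q f false true * q f true true
            = (q f false false + q f false true) * (q f true false + q f true true) := by ring
        rw [this, hqw, hqw, mul_div_assoc, div_self hw, mul_one]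
    rw [Finset.sum_congr rfl (fun f _ => hinner f)]
    show (∑ f : Bool → Bool, Tr M (Q f) 1) = 1
    rw [Tr_sum_left, hQsum_all, Tr_one_one, hM]
  · intro a b c d
    have hinner : ∀ f, ∑ g : Bool → Bool,
        (if w f = 0 then 0 else q f false (g false) * q f true (g true) / w f) *
          (if d = g b then (1:ℝ) else 0) = q f b d := by
      intro f
      by_cases hw : w f = 0
      · simp [hw, hq0 f hw b d]
      · simp only [if_neg hw]
        rw [sum_boolfun (fun g => q f false (g false) * q f true (g true) / w f *
          (if d = g b then (1:ℝ) else 0))]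
        cases b <;> cases d <;>
          simp only [bfun, Bool.cond_false, Bool.cond_true, reduceIte, Bool.false_eq_true,
            Bool.true_eq_false, if_false, if_true, mul_one, mul_zero, add_zero, zero_add]
        · rw [← add_div, ← mul_add, hqw, mul_div_assoc, div_self hw, mul_one]
        · rw [← add_div, ← mul_add, hqw, mul_div_assoc, div_self hw, mul_one]
        · rw [← add_div, ← add_mul, hqw, mul_comm, mul_div_assoc, div_self hw, mul_one]
        · rw [← add_div, ← add_mul, hqw, mul_comm, mul_div_assoc, div_self hw, mul_one]
    have step1 : ∀ f, ∑ g : Bool → Bool,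
        (if w f = 0 then 0 else q f false (g false) * q f true (g true) / w f) *
          ((if c = f a then (1:ℝ) else 0) * (if d = g b then (1:ℝ) else 0))
        = (if c = f a then (1:ℝ) else 0) * q f b d := by
      intro f
      rw [← hinner f, Finset.mul_sum]
      apply Finset.sum_congr rfl
      intro g _
      ring
    rw [Finset.sum_congr rfl (fun f _ => step1 f)]
    have step2 : ∀ f, (if c = f a then (1:ℝ) else 0) * q f b d
        = Tr M (if c = f a then Q f else 0) (B b d) := by
      intro f
      by_cases h : c = f a
      · rw [if_pos h, if_pos h, one_mul, hqdef]
      · rw [if_neg h, if_neg h, zero_mul, Tr_zero_left]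
    rw [Finset.sum_congr rfl (fun f _ => step2 f), Tr_sum_left, hQcond]

lemma trace_form {X Y : Type} [Fintype X] [Fintype Y] (M : Matrix X Y ℂ) (P : Matrix X X ℂ)
    (R : Matrix Y Y ℂ) :
    trace (Mᴴ * P * M * Rᵀ) =
      ∑ a, ∑ b, ∑ c, ∑ d, (starRingEnd ℂ) (M a b) * (P a c * R b d) * M c d := by
  simp only [trace, Matrix.mul_apply, diag, conjTranspose_apply, transpose_apply,
    Finset.sum_mul, Finset.mul_sum]
  conv_lhs => enter [2, b, 2, d]; rw [Finset.sum_comm]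
  conv_lhs => enter [2, b]; rw [Finset.sum_comm]
  rw [Finset.sum_comm]
  conv_lhs => enter [2, a, 2, b]; rw [Finset.sum_comm]
  apply Finset.sum_congr rfl; intro a _
  apply Finset.sum_congr rfl; intro b _
  apply Finset.sum_congr rfl; intro c _
  apply Finset.sum_congr rfl; intro d _
  simp only [starRingEnd_apply]
  ring


lemma conj_comm_T {X Y : Type} (M : Matrix X Y ℂ) : ((Mᵀ)ᴴ)ᵀ = Mᴴ := by
  ext i j; simp [conjTranspose_apply, transpose_apply]

lemma trace_norm_transpose {X Y : Type} [Fintype X] [Fintype Y] (M : Matrix X Y ℂ) :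
    trace ((Mᵀ)ᴴ * Mᵀ) = trace (Mᴴ * M) := by
  calc trace ((Mᵀ)ᴴ * Mᵀ) = trace (((Mᵀ)ᴴ * Mᵀ)ᵀ) := (trace_transpose _).symm
    _ = trace (M * Mᴴ) := by rw [transpose_mul, transpose_transpose, conj_comm_T]
    _ = trace (Mᴴ * M) := trace_mul_comm _ _

section Bridge

variable {dim : Fin 2 → ℕ}

/-- The state as a matrix. -/
noncomputable def mat (ψ : (∀ i : Fin 2, Fin (dim i)) → ℂ) :
    Matrix (Fin (dim 0)) (Fin (dim 1)) ℂ :=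
  fun a b => ψ ((piFinTwoEquiv (fun i => Fin (dim i))).symm (a, b))

lemma pi_sum_eq {M : Type} [AddCommMonoid M] (F : (∀ i : Fin 2, Fin (dim i)) → M) :
    ∑ x, F x = ∑ a, ∑ b, F ((piFinTwoEquiv (fun i => Fin (dim i))).symm (a, b)) := by
  rw [← Equiv.sum_comp (piFinTwoEquiv (fun i => Fin (dim i))).symm F, Fintype.sum_prod_type]

lemma bridge (proj : ∀ i : Fin 2, Bool → Bool → Matrix (Fin (dim i)) (Fin (dim i)) ℂ)
    (ψ : (∀ i : Fin 2, Fin (dim i)) → ℂ) (o d : Fin 2 → Bool) :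
    projBehavior dim proj ψ o d =
      Tr (mat ψ) (proj 0 (o 0) (d 0)) (proj 1 (o 1) (d 1)) := by
  rw [projBehavior, Tr]
  congr 1
  rw [trace_form]
  rw [pi_sum_eq (fun x => ∑ y, (starRingEnd ℂ) (ψ x) *
    (∏ i, proj i (o i) (d i) (x i) (y i)) * ψ y)]
  apply Finset.sum_congr rfl; intro a _
  apply Finset.sum_congr rfl; intro b _
  rw [pi_sum_eq (fun y => (starRingEnd ℂ) (ψ ((piFinTwoEquiv (fun i => Fin (dim i))).symm (a, b)))
    * (∏ i, proj i (o i) (d i) (((piFinTwoEquiv (fun i => Fin (dim i))).symm (a, b)) i) (y i))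
    * ψ y)]
  apply Finset.sum_congr rfl; intro c _
  apply Finset.sum_congr rfl; intro e _
  simp only [Fin.prod_univ_two, mat, piFinTwoEquiv_symm_apply, Fin.cons_zero, Fin.cons_one]

lemma mat_norm (ψ : (∀ i : Fin 2, Fin (dim i)) → ℂ)
    (h : ∑ x, Complex.normSq (ψ x) = 1) : (trace ((mat ψ)ᴴ * mat ψ)).re = 1 := by
  have ht : trace ((mat ψ)ᴴ * mat ψ) =
      ∑ b, ∑ a, (starRingEnd ℂ) (mat ψ a b) * mat ψ a b := by
    simp [trace, Matrix.mul_apply, Matrix.diag, Matrix.conjTranspose_apply]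
  rw [ht]
  rw [pi_sum_eq (fun x => Complex.normSq (ψ x))] at h
  rw [← h, Finset.sum_comm]
  simp only [Complex.re_sum]
  apply Finset.sum_congr rfl; intro b _
  apply Finset.sum_congr rfl; intro a _
  rw [mul_comm, Complex.mul_conj]
  simp [mat]

end Bridge

lemma main1 (S : QStrategy (fun _ : Fin 2 => Bool) (fun _ : Fin 2 => Bool))
    (hS : S.Degenerate) : IsClassicalBehavior S.behavior := by
  obtain ⟨i, oo, dd, hdeg⟩ := hS
  have hMnorm := mat_norm S.state S.state_norm
  have hAh : ∀ (j : Fin 2) a c, (S.proj j a c)ᴴ = S.proj j a c := fun j a c => S.proj_herm j a c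
  have hAsum : ∀ (j : Fin 2) a, S.proj j a false + S.proj j a true = 1 := by
    intro j a
    have := S.proj_sum j a
    rwa [Fintype.sum_bool, add_comm] at this
  -- the pair equivalence for functions Fin 2 → (Bool → Bool)
  have hpair : ∀ (G : (∀ _ : Fin 2, Bool → Bool) → ℝ),
      ∑ F, G F = ∑ u : Bool → Bool, ∑ v : Bool → Bool,
        G ((piFinTwoEquiv (fun _ => Bool → Bool)).symm (u, v)) := by
    intro G
    rw [← Equiv.sum_comp (piFinTwoEquiv (fun _ => Bool → Bool)).symm G, Fintype.sum_prod_type]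
  fin_cases i
  · obtain ⟨μ2, hnn, hsum1, hrep⟩ := core (mat S.state) (S.proj 0) (S.proj 1)
      (hAh 0) (S.proj_idem 0) (hAsum 0) (hAh 1) (S.proj_idem 1) (hAsum 1) hMnorm
      ⟨oo, dd, hdeg⟩
    refine ⟨fun F => μ2 (F 0) (F 1), fun F => hnn _ _, ?_, ?_⟩
    · rw [hpair (fun F => μ2 (F 0) (F 1))]
      simpa using hsum1
    · intro o d
      rw [QStrategy.behavior, bridge, hrep (o 0) (o 1) (d 0) (d 1)]
      rw [hpair (fun F => μ2 (F 0) (F 1) * detBehavior F o d)]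
      apply Finset.sum_congr rfl; intro u _
      apply Finset.sum_congr rfl; intro v _
      simp only [detBehavior, Fin.prod_univ_two, piFinTwoEquiv_symm_apply, Fin.cons_zero,
        Fin.cons_one]
  · obtain ⟨μ2, hnn, hsum1, hrep⟩ := core (mat S.state)ᵀ (S.proj 1) (S.proj 0)
      (hAh 1) (S.proj_idem 1) (hAsum 1) (hAh 0) (S.proj_idem 0) (hAsum 0)
      (by rw [trace_norm_transpose]; exact hMnorm) ⟨oo, dd, hdeg⟩
    refine ⟨fun F => μ2 (F 1) (F 0), fun F => hnn _ _, ?_, ?_⟩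
    · rw [hpair (fun F => μ2 (F 1) (F 0))]
      rw [Finset.sum_comm]
      simpa using hsum1
    · intro o d
      rw [QStrategy.behavior, bridge, Tr_swap, hrep (o 1) (o 0) (d 1) (d 0)]
      rw [hpair (fun F => μ2 (F 1) (F 0) * detBehavior F o d)]
      rw [Finset.sum_comm]
      apply Finset.sum_congr rfl; intro u _
      apply Finset.sum_congr rfl; intro v _
      simp only [detBehavior, Fin.prod_univ_two, piFinTwoEquiv_symm_apply, Fin.cons_zero,
        Fin.cons_one]
      ring

/-- The `T`-semiclassical modification of `S` with fallback `f`. -/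
noncomputable def semiS (S : QStrategy (fun _ : Fin 2 => Bool) (fun _ : Fin 2 => Bool))
    (f : ∀ _ : Fin 2, Bool → Bool) (T : Finset (Fin 2)) :
    QStrategy (fun _ : Fin 2 => Bool) (fun _ : Fin 2 => Bool) where
  dim := S.dim
  dim_pos := S.dim_pos
  proj := fun i oi di => if i ∈ T then
      (if di = f i oi then (1 : Matrix (Fin (S.dim i)) (Fin (S.dim i)) ℂ) else 0)
    else S.proj i oi di
  proj_herm := by
    intro i o d
    by_cases h : i ∈ T
    · by_cases hd : d = f i o <;>
        simp [h, hd, Matrix.isHermitian_one, Matrix.isHermitian_zero]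
    · simp [h, S.proj_herm i o d]
  proj_idem := by
    intro i o d
    by_cases h : i ∈ T
    · by_cases hd : d = f i o <;> simp [h, hd]
    · simp [h, S.proj_idem i o d]
  proj_orth := by
    intro i o d d' hne
    by_cases h : i ∈ T
    · by_cases hd : d = f i o
      · have : ¬ d' = f i o := fun hh => hne (hd.trans hh.symm)
        simp [h, hd, this]
      · simp [h, hd]
    · simp [h, S.proj_orth i o d d' hne]
  proj_sum := by
    intro i o
    by_cases h : i ∈ T
    · simp only [h, if_true]
      rw [Fintype.sum_bool]
      cases hf : f i o <;> simp [hf]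
    · have := S.proj_sum i o
      rw [Fintype.sum_bool] at this
      simpa [h] using this
  state := S.state
  state_norm := S.state_norm

lemma semiS_deg (S : QStrategy (fun _ : Fin 2 => Bool) (fun _ : Fin 2 => Bool))
    (f : ∀ _ : Fin 2, Bool → Bool) (T : Finset (Fin 2)) (hS : S.Degenerate) :
    (semiS S f T).Degenerate := by
  rcases T.eq_empty_or_nonempty with rfl | ⟨i, hi⟩
  · obtain ⟨i, o, d, h⟩ := hS
    exact ⟨i, o, d, by simp [semiS]; exact h⟩
  · exact ⟨i, false, f i false, Or.inr (by simp [semiS, hi]; rfl)⟩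

end TCAux

open TC in
/-- in a (2,2,2) problem, the behavior of a degenerate quantum strategy is a
classical behavior (a convex combination of the 16 deterministic behaviors); moreover, for any
fallback deterministic strategy and any efficiencies `η₁, η₂ ∈ [0,1]`, the corresponding
lossy behavior is also classical. -/
theorem degenerate_behavior_isClassical
    (S : QStrategy (fun _ : Fin 2 => Bool) (fun _ : Fin 2 => Bool))
    (hS : S.Degenerate) :
    IsClassicalBehavior S.behavior ∧
    ∀ (f : ∀ _ : Fin 2, Bool → Bool) (η : Fin 2 → ℝ),
      (∀ i, η i ∈ Set.Icc (0 : ℝ) 1) →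
      IsClassicalBehavior (lossyBehavior S f η) := by
  constructor
  · exact TCAux.main1 S hS
  · intro f η hη
    set wt : Finset (Fin 2) → ℝ :=
      fun T => (∏ i ∈ T, (1 - η i)) * ∏ i ∈ Tᶜ, η i with hwt
    have hwt_nonneg : ∀ T, 0 ≤ wt T := by
      intro T
      apply mul_nonneg
      · exact Finset.prod_nonneg fun i _ => by linarith [(hη i).2]
      · exact Finset.prod_nonneg fun i _ => (hη i).1
    have hwt_sum : ∑ T : Finset (Fin 2), wt T = 1 := by
      have h1 : ∏ i : Fin 2, ((1 - η i) + η i) = 1 := by simp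
      calc ∑ T : Finset (Fin 2), wt T
          = ∑ T ∈ Finset.univ.powerset,
              (∏ i ∈ T, (1 - η i)) * ∏ i ∈ Finset.univ \ T, η i := by
            rw [Finset.powerset_univ]
            apply Finset.sum_congr rfl
            intro T _
            simp only [hwt, Finset.compl_eq_univ_sdiff]
        _ = ∏ i : Fin 2, ((1 - η i) + η i) := (Finset.prod_add _ _ _).symm
        _ = 1 := h1
    have H : ∀ T : Finset (Fin 2), ∃ μ : (∀ _ : Fin 2, Bool → Bool) → ℝ,
        (∀ g, 0 ≤ μ g) ∧ ∑ g, μ g = 1 ∧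
        ∀ o d, (TCAux.semiS S f T).behavior o d = ∑ g, μ g * detBehavior g o d :=
      fun T => TCAux.main1 (TCAux.semiS S f T) (TCAux.semiS_deg S f T hS)
    choose μT hμ1 hμ2 hμ3 using H
    refine ⟨fun F => ∑ T : Finset (Fin 2), wt T * μT T F, ?_, ?_, ?_⟩
    · intro F
      exact Finset.sum_nonneg fun T _ => mul_nonneg (hwt_nonneg T) (hμ1 T F)
    · dsimp only
      rw [Finset.sum_comm]
      calc ∑ T : Finset (Fin 2), ∑ F, wt T * μT T F
          = ∑ T : Finset (Fin 2), wt T := by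
            apply Finset.sum_congr rfl
            intro T _
            rw [← Finset.mul_sum, hμ2 T, mul_one]
        _ = 1 := hwt_sum
    · intro o d
      have hlb : lossyBehavior S f η o d =
          ∑ T : Finset (Fin 2), wt T * (TCAux.semiS S f T).behavior o d := rfl
      rw [hlb]
      have hpush : ∀ F : ∀ _ : Fin 2, Bool → Bool,
          (∑ T : Finset (Fin 2), wt T * μT T F) * detBehavior F o d =
            ∑ T : Finset (Fin 2), wt T * (μT T F * detBehavior F o d) := by
        intro F
        rw [Finset.sum_mul]
        apply Finset.sum_congr rfl
        intro T _
        ring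
      rw [Finset.sum_congr rfl (fun F _ => hpush F), Finset.sum_comm]
      apply Finset.sum_congr rfl
      intro T _
      rw [hμ3 T o d, Finset.mul_sum]
end

section
/- For any n-party TC setting, any quantum strategy S_q, any deterministic strategy S_d, and any efficiencies η_1,…,η_n ∈ [0,1], the {η_i}-lossy behavior of (S_q, S_d) is itself a quantum behavior, i.e., it arises from some quantum strategy of some finite dimensions. -/
open scoped BigOperators

namespace TCAux
open TC Matrix

/-- Pairing equivalence for pi types over `Fin (m i) × Fin 2`. -/
def pairEquiv {n : ℕ} (m : Fin n → ℕ) :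
    ((∀ i, Fin (m i)) × (Fin n → Fin 2)) ≃ (∀ i, Fin (m i * 2)) where
  toFun p i := finProdFinEquiv (p.1 i, p.2 i)
  invFun g := (fun i => (finProdFinEquiv.symm (g i)).1, fun i => (finProdFinEquiv.symm (g i)).2)
  left_inv p := by
    simp only [Equiv.symm_apply_apply]
  right_inv g := by
    funext i
    simp only [Prod.mk.eta, Equiv.apply_symm_apply]

def subsetEquiv (n : ℕ) : Finset (Fin n) ≃ (Fin n → Fin 2) where
  toFun T i := if i ∈ T then 0 else 1
  invFun s := Finset.univ.filter (fun i => s i = 0)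
  left_inv T := by
    ext i; by_cases h : i ∈ T <;> simp [h]
  right_inv s := by
    funext i
    by_cases h : s i = 0
    · simp [h]
    · have h1 : s i = 1 := by omega
      simp [h1]

theorem prod_ite_eq_ite {n : ℕ} {β : Type*} [CommMonoidWithZero β]
    (s t : Fin n → Fin 2) (g : Fin n → β) :
    (∏ i, if s i = t i then g i else 0) = if s = t then ∏ i, g i else 0 := by
  by_cases h : s = t
  · subst h; simp
  · obtain ⟨i, hi⟩ := Function.ne_iff.mp h
    rw [if_neg h]
    exact Finset.prod_eq_zero (Finset.mem_univ i) (by simp [hi])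

end TCAux

open TC in
/-- for any quantum strategy `S`, fallback deterministic strategy `f`, and
efficiencies `ηᵢ ∈ [0,1]`, the `{ηᵢ}`-lossy behavior of `(S, f)` is itself a quantum
behavior, i.e., it arises from some quantum strategy of some finite dimensions. -/
theorem lossyBehavior_isQuantum {n : ℕ} {O D : Fin n → Type}
    [∀ i, Fintype (O i)] [∀ i, Nonempty (O i)]
    [∀ i, Fintype (D i)] [∀ i, Nonempty (D i)] [∀ i, DecidableEq (D i)]
    (S : QStrategy O D) (f : ∀ i, O i → D i) (η : Fin n → ℝ)
    (hη : ∀ i, η i ∈ Set.Icc (0 : ℝ) 1) :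
    ∃ S' : QStrategy O D, S'.behavior = lossyBehavior S f η := by
  classical
  set m := S.dim with hm
  let r : Fin n → Fin 2 → ℝ := fun i b => if b = 0 then 1 - η i else η i
  have hr : ∀ i b, 0 ≤ r i b := by
    intro i b
    dsimp only [r]
    split
    · linarith [(hη i).2]
    · exact (hη i).1
  let c : Fin n → Fin 2 → ℂ := fun i b => (Real.sqrt (r i b) : ℂ)
  let blocks : ∀ i, O i → D i → Fin 2 → Matrix (Fin (m i)) (Fin (m i)) ℂ :=
    fun i oi di b => if b = 0 then (if di = f i oi then 1 else 0) else S.proj i oi di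
  let e : ∀ i, (Fin (m i) × Fin 2) ≃ Fin (m i * 2) := fun _ => finProdFinEquiv
  let A : ∀ i, Matrix (Fin (m i) × Fin 2) (Fin (m i) × Fin 2) ℂ ≃ₐ[ℂ]
      Matrix (Fin (m i * 2)) (Fin (m i * 2)) ℂ := fun i => Matrix.reindexAlgEquiv ℂ ℂ (e i)
  have hblocksH : ∀ i oi di b, (blocks i oi di b).conjTranspose = blocks i oi di b := by
    intro i oi di b
    by_cases hb : b = (0 : Fin 2)
    · dsimp only [blocks]
      rw [if_pos hb]
      split <;> simp
    · dsimp only [blocks]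
      rw [if_neg hb]
      exact S.proj_herm i oi di
  have hblocksI : ∀ i oi di, blocks i oi di * blocks i oi di = blocks i oi di := by
    intro i oi di
    funext b
    by_cases hb : b = (0 : Fin 2)
    · simp only [Pi.mul_apply, blocks, if_pos hb]
      split <;> simp
    · simp only [Pi.mul_apply, blocks, if_neg hb]
      exact S.proj_idem i oi di
  have hblocksO : ∀ i oi di di', di ≠ di' → blocks i oi di * blocks i oi di' = 0 := by
    intro i oi di di' hd
    funext b
    by_cases hb : b = (0 : Fin 2)
    · simp only [Pi.mul_apply, blocks, if_pos hb, Pi.zero_apply]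
      split
      · split
        · rename_i h1 h2
          exact absurd (h1.trans h2.symm) hd
        · simp
      · simp
    · simp only [Pi.mul_apply, blocks, if_neg hb, Pi.zero_apply]
      exact S.proj_orth i oi di di' hd
  have hblocksS : ∀ i oi, (∑ di, blocks i oi di) = 1 := by
    intro i oi
    funext b
    by_cases hb : b = (0 : Fin 2)
    · simp only [Finset.sum_apply, blocks, if_pos hb, Pi.one_apply]
      simp
    · simp only [Finset.sum_apply, blocks, if_neg hb, Pi.one_apply]
      exact S.proj_sum i oi
  refine ⟨{
    dim := fun i => m i * 2
    dim_pos := fun i => Nat.mul_pos (S.dim_pos i) two_pos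
    proj := fun i oi di => A i (Matrix.blockDiagonal (blocks i oi di))
    proj_herm := ?_
    proj_idem := ?_
    proj_orth := ?_
    proj_sum := ?_
    state := fun x => S.state (fun i => ((e i).symm (x i)).1) * ∏ i, c i ((e i).symm (x i)).2
    state_norm := ?_ }, ?_⟩
  · -- herm
    intro i oi di
    rw [Matrix.reindexAlgEquiv_apply, Matrix.reindex_apply]
    refine Matrix.IsHermitian.submatrix ?_ _
    show _ = _
    rw [Matrix.blockDiagonal_conjTranspose]
    exact congrArg Matrix.blockDiagonal (funext (hblocksH i oi di))
  · -- idem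
    intro i oi di
    rw [← map_mul, ← Matrix.blockDiagonal_mul]
    exact congrArg (A i) (congrArg Matrix.blockDiagonal (hblocksI i oi di))
  · -- orth
    intro i oi di di' hd
    rw [← map_mul, ← Matrix.blockDiagonal_mul]
    have h0 : (fun k => blocks i oi di k * blocks i oi di' k) = (0 : Fin 2 → Matrix (Fin (m i)) (Fin (m i)) ℂ) :=
      hblocksO i oi di di' hd
    rw [h0, Matrix.blockDiagonal_zero, map_zero]
  · -- sum
    intro i oi
    rw [← map_sum]
    have hsum := (map_sum (Matrix.blockDiagonalAddMonoidHom (Fin (m i)) (Fin (m i)) (Fin 2) ℂ)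
      (fun di => blocks i oi di) Finset.univ).symm
    simp only [Matrix.blockDiagonalAddMonoidHom_apply] at hsum
    rw [hsum, hblocksS, Matrix.blockDiagonal_one, map_one]
  · -- state norm
    rw [← Equiv.sum_comp (TCAux.pairEquiv m)
      (fun x => Complex.normSq (S.state (fun i => ((e i).symm (x i)).1) *
        ∏ i, c i ((e i).symm (x i)).2))]
    have key : ∀ p : (∀ i, Fin (m i)) × (Fin n → Fin 2),
        Complex.normSq (S.state (fun i => ((e i).symm ((TCAux.pairEquiv m) p i)).1) *
          ∏ i, c i ((e i).symm ((TCAux.pairEquiv m) p i)).2)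
        = Complex.normSq (S.state p.1) * ∏ i, r i (p.2 i) := by
      intro p
      have h1 : ∀ i, (e i).symm ((TCAux.pairEquiv m) p i) = (p.1 i, p.2 i) := fun i =>
        Equiv.symm_apply_apply _ _
      simp only [h1]
      rw [map_mul Complex.normSq, map_prod Complex.normSq]
      congr 1
      refine Finset.prod_congr rfl fun i _ => ?_
      dsimp only [c]
      rw [Complex.normSq_ofReal, Real.mul_self_sqrt (hr i (p.2 i))]
    rw [Finset.sum_congr rfl fun p _ => key p]
    rw [Fintype.sum_prod_type]
    dsimp only
    rw [← Finset.sum_mul_sum]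
    have h2 : ∑ s : Fin n → Fin 2, ∏ i, r i (s i) = 1 := by
      have h3 : ∏ i, (∑ b ∈ (Finset.univ : Finset (Fin 2)), r i b) =
          ∑ s ∈ Fintype.piFinset (fun _ : Fin n => (Finset.univ : Finset (Fin 2))), ∏ i, r i (s i) :=
        Finset.prod_univ_sum _ _
      rw [Fintype.piFinset_univ] at h3
      rw [← h3]
      have h4 : ∀ i : Fin n, (∑ b ∈ (Finset.univ : Finset (Fin 2)), r i b) = 1 := by
        intro i
        rw [Fin.sum_univ_two]
        dsimp only [r]
        norm_num
      rw [Finset.prod_congr rfl fun i _ => h4 i, Finset.prod_const_one]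
    rw [S.state_norm, h2, one_mul]
  · -- behavior
    funext o d
    have hC : ∀ i b, (starRingEnd ℂ) (c i b) = c i b := fun i b => Complex.conj_ofReal _
    have hCC : ∀ i b, c i b * c i b = (r i b : ℂ) := by
      intro i b
      dsimp only [c]
      rw [← Complex.ofReal_mul, Real.mul_self_sqrt (hr i b)]
    have entry : ∀ i (p q : Fin (m i) × Fin 2),
        (A i (Matrix.blockDiagonal (blocks i (o i) (d i)))) ((e i) p) ((e i) q)
          = if p.2 = q.2 then blocks i (o i) (d i) p.2 p.1 q.1 else 0 := by
      intro i p q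
      rw [Matrix.reindexAlgEquiv_apply, Matrix.reindex_apply, Matrix.submatrix_apply,
        Equiv.symm_apply_apply, Equiv.symm_apply_apply, Matrix.blockDiagonal_apply]
    set pe := TCAux.pairEquiv m with hpedef
    have hpe1 : ∀ (p : (∀ i, Fin (m i)) × (Fin n → Fin 2)) (i : Fin n),
        ((e i).symm (pe p i)) = (p.1 i, p.2 i) := fun p i => Equiv.symm_apply_apply _ _
    set ψ' : (∀ i, Fin (m i * 2)) → ℂ :=
      fun x => S.state (fun i => ((e i).symm (x i)).1) * ∏ i, c i ((e i).symm (x i)).2 with hψ'def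
    set P : ∀ i, Matrix (Fin (m i * 2)) (Fin (m i * 2)) ℂ :=
      fun i => A i (Matrix.blockDiagonal (blocks i (o i) (d i))) with hPdef
    set Bm : Finset (Fin n) → ∀ i, Matrix (Fin (m i)) (Fin (m i)) ℂ := fun T i =>
      if i ∈ T then (if d i = f i (o i) then 1 else 0) else S.proj i (o i) (d i) with hBmdef
    set inner : Finset (Fin n) → ℂ := fun T =>
      ∑ x, ∑ y, (starRingEnd ℂ) (S.state x) * (∏ i, Bm T i (x i) (y i)) * S.state y with hinnerdef
    set w : Finset (Fin n) → ℝ := fun T => (∏ i ∈ T, (1 - η i)) * ∏ i ∈ Tᶜ, η i with hwdef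
    have hψ'pe : ∀ p, ψ' (pe p) = S.state p.1 * ∏ i, c i (p.2 i) := by
      intro p
      dsimp only [ψ']
      simp only [hpe1]
    have hProd : ∀ p q : (∀ i, Fin (m i)) × (Fin n → Fin 2),
        (∏ i, P i (pe p i) (pe q i))
          = if p.2 = q.2 then ∏ i, blocks i (o i) (d i) (p.2 i) (p.1 i) (q.1 i) else 0 := by
      intro p q
      have h1 : ∀ i : Fin n, P i (pe p i) (pe q i)
          = if p.2 i = q.2 i then blocks i (o i) (d i) (p.2 i) (p.1 i) (q.1 i) else 0 :=
        fun i => entry i (p.1 i, p.2 i) (q.1 i, q.2 i)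
      rw [Finset.prod_congr rfl fun i _ => h1 i]
      exact TCAux.prod_ite_eq_ite p.2 q.2 _
    have main : (∑ x, ∑ y, (starRingEnd ℂ) (ψ' x) * (∏ i, P i (x i) (y i)) * ψ' y)
        = ∑ T : Finset (Fin n), (w T : ℂ) * inner T := by
      calc (∑ x, ∑ y, (starRingEnd ℂ) (ψ' x) * (∏ i, P i (x i) (y i)) * ψ' y)
          = ∑ p, ∑ q, (starRingEnd ℂ) (ψ' (pe p)) * (∏ i, P i (pe p i) (pe q i)) * ψ' (pe q) := by
            rw [← Equiv.sum_comp pe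
              (fun x => ∑ y, (starRingEnd ℂ) (ψ' x) * (∏ i, P i (x i) (y i)) * ψ' y)]
            exact Finset.sum_congr rfl fun p _ =>
              (Equiv.sum_comp pe fun y => (starRingEnd ℂ) (ψ' (pe p)) *
                (∏ i, P i (pe p i) (y i)) * ψ' y).symm
        _ = ∑ p : (∀ i, Fin (m i)) × (Fin n → Fin 2), ∑ q : (∀ i, Fin (m i)) × (Fin n → Fin 2),
              ((starRingEnd ℂ) (S.state p.1) * ∏ i, c i (p.2 i)) *
              (if p.2 = q.2 then ∏ i, blocks i (o i) (d i) (p.2 i) (p.1 i) (q.1 i) else 0) *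
              (S.state q.1 * ∏ i, c i (q.2 i)) := by
            refine Finset.sum_congr rfl fun p _ => Finset.sum_congr rfl fun q _ => ?_
            rw [hψ'pe p, hψ'pe q, hProd p q, map_mul, map_prod]
            simp only [hC]
        _ = ∑ s : Fin n → Fin 2, ∑ x : ∀ i, Fin (m i), ∑ y : ∀ i, Fin (m i),
              (∏ i, (r i (s i) : ℂ)) * ((starRingEnd ℂ) (S.state x) *
                (∏ i, blocks i (o i) (d i) (s i) (x i) (y i)) * S.state y) := by
            simp only [Fintype.sum_prod_type]
            simp only [mul_ite, ite_mul, mul_zero, zero_mul, Finset.sum_ite_eq,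
              Finset.mem_univ, if_true]
            rw [Finset.sum_comm]
            refine Finset.sum_congr rfl fun s _ => Finset.sum_congr rfl fun x _ =>
              Finset.sum_congr rfl fun y _ => ?_
            have hc2 : (∏ i, c i (s i)) * (∏ i, c i (s i)) = ∏ i, (r i (s i) : ℂ) := by
              rw [← Finset.prod_mul_distrib]
              exact Finset.prod_congr rfl fun i _ => hCC i (s i)
            rw [← hc2]
            ring
        _ = ∑ s : Fin n → Fin 2,
              (∏ i, (r i (s i) : ℂ)) * ∑ x : ∀ i, Fin (m i), ∑ y : ∀ i, Fin (m i),
                ((starRingEnd ℂ) (S.state x) *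
                  (∏ i, blocks i (o i) (d i) (s i) (x i) (y i)) * S.state y) := by
            refine Finset.sum_congr rfl fun s _ => ?_
            rw [Finset.mul_sum]
            exact Finset.sum_congr rfl fun x _ => (Finset.mul_sum _ _ _).symm
        _ = ∑ T : Finset (Fin n), (w T : ℂ) * inner T := by
            rw [← Equiv.sum_comp (TCAux.subsetEquiv n)
              (fun s => (∏ i, (r i (s i) : ℂ)) * ∑ x : ∀ i, Fin (m i), ∑ y : ∀ i, Fin (m i),
                ((starRingEnd ℂ) (S.state x) *
                  (∏ i, blocks i (o i) (d i) (s i) (x i) (y i)) * S.state y))]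
            refine Finset.sum_congr rfl fun T _ => ?_
            have hsT : ∀ i : Fin n, TCAux.subsetEquiv n T i = if i ∈ T then 0 else 1 := fun i => rfl
            have hw : (∏ i, (r i (TCAux.subsetEquiv n T i) : ℂ)) = (w T : ℂ) := by
              rw [← Complex.ofReal_prod]
              congr 1
              have hr2 : ∀ i : Fin n, r i (TCAux.subsetEquiv n T i)
                  = if i ∈ T then 1 - η i else η i := by
                intro i
                rw [hsT i]
                by_cases hi : i ∈ T
                · simp [r, hi]
                · simp [r, hi]
              rw [Finset.prod_congr rfl fun i _ => hr2 i]
              have e1 : ∏ i ∈ T, (1 - η i) = ∏ i ∈ T, (if i ∈ T then 1 - η i else η i) :=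
                Finset.prod_congr rfl fun i hi => by rw [if_pos hi]
              have e2 : ∏ i ∈ Tᶜ, η i = ∏ i ∈ Tᶜ, (if i ∈ T then 1 - η i else η i) :=
                Finset.prod_congr rfl fun i hi => by rw [if_neg (Finset.mem_compl.mp hi)]
              show _ = (∏ i ∈ T, (1 - η i)) * ∏ i ∈ Tᶜ, η i
              rw [e1, e2, ← Finset.prod_union disjoint_compl_right, Finset.union_compl]
            have hB : ∀ (i : Fin n) (x y : ∀ j, Fin (m j)),
                blocks i (o i) (d i) (TCAux.subsetEquiv n T i) (x i) (y i)
                  = Bm T i (x i) (y i) := by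
              intro i x y
              rw [hsT i]
              by_cases hi : i ∈ T
              · simp [blocks, Bm, hi]
              · simp [blocks, Bm, hi]
            rw [hw]
            congr 1
            rw [hinnerdef]
            dsimp only
            refine Finset.sum_congr rfl fun x _ => Finset.sum_congr rfl fun y _ => ?_
            rw [Finset.prod_congr rfl fun i _ => hB i x y]
    show (∑ x, ∑ y, (starRingEnd ℂ) (ψ' x) * (∏ i, P i (x i) (y i)) * ψ' y).re
      = ∑ T : Finset (Fin n), (w T) * (inner T).re
    rw [main, Complex.re_sum]
    exact Finset.sum_congr rfl fun T _ => Complex.re_ofReal_mul _ _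
end

section
/- Consider an n-party (n,2,2) TC problem (|O_i| = |D_i| = 2 for every party i) with weighted utility array w, and fix efficiencies η_1,…,η_n ∈ [0,1]. Then the {η_i}-lossy value — the supremum over all pairs (S_q, S_d) of a quantum strategy and a deterministic strategy of the expected utility of the {η_i}-lossy behavior of (S_q, S_d) — equals the same supremum restricted to quantum strategies S_q that use qubit systems, q_i = 2 for every i. In particular (taking all η_i = 1), the quantum value of an (n,2,2) problem equals the supremum of expected utilities over qubit-only quantum strategies. -/
open scoped BigOperators

set_option maxHeartbeats 1000000

open scoped InnerProductSpace

namespace TCAux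




variable {E : Type} [NormedAddCommGroup E] [InnerProductSpace ℂ E]

/-- One block from a low-dimensional invariant subspace. -/
theorem block_of_invariant [FiniteDimensional ℂ E] (W : Submodule ℂ E)
    (hr : Module.finrank ℂ W ≤ 2) :
    ∃ v : Fin 2 → E, (∀ a, v a ∈ W) ∧
      (∀ a, v a = 0 ∨ ⟪v a, v a⟫_ℂ = 1) ∧
      (∀ a b, a ≠ b → ⟪v a, v b⟫_ℂ = 0) ∧
      (∀ x ∈ W, ∑ a, ⟪v a, x⟫_ℂ • v a = x) := by
  obtain ⟨r, hr'⟩ : ∃ r, Module.finrank ℂ W = r := ⟨_, rfl⟩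
  have b := (stdOrthonormalBasis ℂ W).reindex (finCongr hr')
  have hb := b.orthonormal
  rw [orthonormal_iff_ite] at hb
  rw [hr'] at hr
  interval_cases r
  · -- rank 0 : W = ⊥
    refine ⟨fun _ => 0, by simp, by simp, by simp, ?_⟩
    intro x hx
    have : W = ⊥ := Submodule.finrank_eq_zero.mp hr'
    simp [this] at hx
    simp [hx]
  · -- rank 1
    refine ⟨fun a => if a = 0 then (b 0 : E) else 0, ?_, ?_, ?_, ?_⟩
    · intro a; by_cases h : a = 0 <;> simp [h, Submodule.coe_mem]
    · intro a; by_cases h : a = 0 <;> simp [h]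
      right
      have := hb 0 0
      simp [show ‖(b 0 : E)‖ = 1 from b.orthonormal.1 0]
    · intro a c hac
      by_cases h : a = 0 <;> by_cases h' : c = 0 <;> simp_all
    · intro x hx
      have := b.sum_repr' ⟨x, hx⟩
      have hcoe := congrArg (Subtype.val) this
      rw [Fin.sum_univ_one] at hcoe
      simp only [Fin.sum_univ_two]
      simp only [if_pos rfl, if_neg (by decide : (1 : Fin 2) ≠ 0)]
      simpa [Submodule.coe_inner, Submodule.coe_smul] using hcoe
  · -- rank 2
    refine ⟨fun a => (b a : E), fun a => Submodule.coe_mem _, ?_, ?_, ?_⟩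
    · intro a; right; simp [show ‖(b a : E)‖ = 1 from b.orthonormal.1 a]
    · intro a c hac; rw [← Submodule.coe_inner]; exact b.orthonormal.2 hac
    · intro x hx
      have := b.sum_repr' ⟨x, hx⟩
      have hcoe := congrArg (Subtype.val) this
      rw [Fin.sum_univ_two] at hcoe ⊢
      simpa [Submodule.coe_inner, Submodule.coe_smul] using hcoe




variable {E : Type} [NormedAddCommGroup E] [InnerProductSpace ℂ E]

theorem trivial_case (hE : Subsingleton E) (A B : E →ₗ[ℂ] E) :
    ∃ (K : Type) (_ : Fintype K) (v : K → Fin 2 → E),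
      (∀ k a, v k a = 0 ∨ ⟪v k a, v k a⟫_ℂ = 1) ∧
      (∀ k a b, a ≠ b → ⟪v k a, v k b⟫_ℂ = 0) ∧
      (∀ x : E, ∑ k, ∑ a, ⟪v k a, x⟫_ℂ • v k a = x) ∧
      (∀ k b, A (v k b) = ∑ a, ⟪v k a, A (v k b)⟫_ℂ • v k a) ∧
      (∀ k b, B (v k b) = ∑ a, ⟪v k a, B (v k b)⟫_ℂ • v k a) := by
  refine ⟨PEmpty, inferInstance, fun k => k.elim, fun k => k.elim, fun k => k.elim,
    fun x => ?_, fun k => k.elim, fun k => k.elim⟩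
  have : x = 0 := Subsingleton.elim x 0
  simp [this]

theorem span_pair_invariant (A B : E →ₗ[ℂ] E)
    (hA2 : ∀ x, A (A x) = A x) (hB2 : ∀ x, B (B x) = B x)
    (w : E) (μ : ℂ) (hw : A w + B w = μ • w) :
    (∀ x ∈ Submodule.span ℂ {w, A w}, A x ∈ Submodule.span ℂ {w, A w}) ∧
    (∀ x ∈ Submodule.span ℂ {w, A w}, B x ∈ Submodule.span ℂ {w, A w}) := by
  set W := Submodule.span ℂ {w, A w} with hW
  have hwW : w ∈ W := Submodule.subset_span (by simp)
  have hAwW : A w ∈ W := Submodule.subset_span (by simp)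
  have hBw : B w = μ • w - A w := by
    rw [← hw]; abel
  have hBwW : B w ∈ W := by
    rw [hBw]; exact Submodule.sub_mem _ (Submodule.smul_mem _ _ hwW) hAwW
  have hBAw : B (A w) ∈ W := by
    have hAw : A w = μ • w - B w := by rw [← hw]; abel
    have : B (A w) = (μ - 1) • B w := by
      rw [hAw, map_sub, map_smul, hB2]
      rw [sub_smul, one_smul]
    rw [this]
    exact Submodule.smul_mem _ _ hBwW
  constructor
  · intro x hx
    induction hx using Submodule.span_induction with
    | mem y hy =>
      rcases hy with rfl | rfl
      · exact hAwW
      · rw [hA2]; exact hAwW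
    | zero => simp
    | add y z _ _ hy hz => rw [map_add]; exact Submodule.add_mem _ hy hz
    | smul c y _ hy => rw [map_smul]; exact Submodule.smul_mem _ _ hy
  · intro x hx
    induction hx using Submodule.span_induction with
    | mem y hy =>
      rcases hy with rfl | rfl
      · exact hBwW
      · exact hBAw
    | zero => simp
    | add y z _ _ hy hz => rw [map_add]; exact Submodule.add_mem _ hy hz
    | smul c y _ hy => rw [map_smul]; exact Submodule.smul_mem _ _ hy



theorem coe_sum {K : Type*} [Fintype K] (p : Submodule ℂ E) (u : K → p) :
    ((∑ a, u a : p) : E) = ∑ a, (u a : E) := by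
  simpa using map_sum p.subtype u Finset.univ

theorem jordan_blocks : ∀ (N : ℕ) (E : Type) (_inst1 : NormedAddCommGroup E)
    (_inst2 : InnerProductSpace ℂ E) (_inst3 : FiniteDimensional ℂ E),
    Module.finrank ℂ E ≤ N →
    ∀ A B : E →ₗ[ℂ] E,
    (∀ x y, ⟪A x, y⟫_ℂ = ⟪x, A y⟫_ℂ) → (∀ x, A (A x) = A x) →
    (∀ x y, ⟪B x, y⟫_ℂ = ⟪x, B y⟫_ℂ) → (∀ x, B (B x) = B x) →
    ∃ (K : Type) (_ : Fintype K) (v : K → Fin 2 → E),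
      (∀ k a, v k a = 0 ∨ ⟪v k a, v k a⟫_ℂ = 1) ∧
      (∀ k a b, a ≠ b → ⟪v k a, v k b⟫_ℂ = 0) ∧
      (∀ x : E, ∑ k, ∑ a, ⟪v k a, x⟫_ℂ • v k a = x) ∧
      (∀ k b, A (v k b) = ∑ a, ⟪v k a, A (v k b)⟫_ℂ • v k a) ∧
      (∀ k b, B (v k b) = ∑ a, ⟪v k a, B (v k b)⟫_ℂ • v k a) := by
  intro N
  induction N with
  | zero =>
    intro E _ _ _ hN A B _ _ _ _
    have : Subsingleton E := Module.finrank_zero_iff.mp (Nat.le_zero.mp hN)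
    exact trivial_case this A B
  | succ N ih =>
    intro E _ _ _ hN A B hAs hA2 hBs hB2
    by_cases hE : Module.finrank ℂ E = 0
    · exact trivial_case (Module.finrank_zero_iff.mp hE) A B
    · have : Nontrivial E := Module.finrank_pos_iff.mp (Nat.pos_of_ne_zero hE)
      -- eigenvector of A + B
      obtain ⟨μ, hμ⟩ := Module.End.exists_eigenvalue (A + B : Module.End ℂ E)
      obtain ⟨w, hweig⟩ := hμ.exists_hasEigenvector
      have hw0 : w ≠ 0 := hweig.right
      have hw : A w + B w = μ • w := by
        have := hweig.apply_eq_smul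
        simpa using this
      set W := Submodule.span ℂ {w, A w} with hWdef
      obtain ⟨hWA, hWB⟩ := span_pair_invariant A B hA2 hB2 w μ hw
      -- rank bounds
      classical
      have hrW : Module.finrank ℂ W ≤ 2 := by
        have h1 : Module.finrank ℂ W ≤ ({w, A w} : Set E).toFinset.card :=
          finrank_span_le_card ({w, A w} : Set E)
        have h2 : ({w, A w} : Set E).toFinset.card ≤ 2 := by
          rw [Set.toFinset_insert, Set.toFinset_singleton]
          exact (Finset.card_insert_le _ _).trans (by simp)
        omega
      have hrWpos : 0 < Module.finrank ℂ W := by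
        rw [Module.finrank_pos_iff]
        exact ⟨⟨w, Submodule.subset_span (by simp)⟩, 0, by simp [hw0]⟩
      -- orthogonal complement invariance
      have hWAperp : ∀ x ∈ Wᗮ, A x ∈ Wᗮ := by
        intro x hx
        rw [Submodule.mem_orthogonal]
        intro u hu
        rw [← hAs u x]
        exact hx (A u) (hWA u hu)
      have hWBperp : ∀ x ∈ Wᗮ, B x ∈ Wᗮ := by
        intro x hx
        rw [Submodule.mem_orthogonal]
        intro u hu
        rw [← hBs u x]
        exact hx (B u) (hWB u hu)
      have hrperp : Module.finrank ℂ ↥Wᗮ ≤ N := by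
        have := W.finrank_add_finrank_orthogonal
        omega
      -- restrict to the complement
      set A' : ↥Wᗮ →ₗ[ℂ] ↥Wᗮ := A.restrict hWAperp with hA'def
      set B' : ↥Wᗮ →ₗ[ℂ] ↥Wᗮ := B.restrict hWBperp with hB'def
      have hA'c : ∀ x : ↥Wᗮ, (A' x : E) = A x := fun x => rfl
      have hB'c : ∀ x : ↥Wᗮ, (B' x : E) = B x := fun x => rfl
      obtain ⟨K', _, v', hO1', hO2', hO3', hO4', hO5'⟩ :=
        ih ↥Wᗮ inferInstance inferInstance inferInstance hrperp A' B'
          (fun x y => by simp only [Submodule.coe_inner, hA'c]; exact hAs x y)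
          (fun x => Subtype.ext (by simp only [hA'c]; exact hA2 x))
          (fun x y => by simp only [Submodule.coe_inner, hB'c]; exact hBs x y)
          (fun x => Subtype.ext (by simp only [hB'c]; exact hB2 x))
      obtain ⟨v₀, hv₀mem, hv₀1, hv₀2, hv₀par⟩ := block_of_invariant W hrW
      refine ⟨Option K', inferInstance,
        fun k => Option.rec v₀ (fun k' a => (v' k' a : E)) k, ?_, ?_, ?_, ?_, ?_⟩
      · rintro (_ | k) a
        · exact hv₀1 a
        · rcases hO1' k a with h | h
          · left
            show ((v' k a : E)) = 0
            rw [h]; rfl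
          · right; rw [← Submodule.coe_inner]; exact h
      · rintro (_ | k) a b hab
        · exact hv₀2 a b hab
        · rw [← Submodule.coe_inner]; exact hO2' k a b hab
      · intro x
        obtain ⟨p, hp, q, hq, rfl⟩ := W.exists_add_mem_mem_orthogonal x
        rw [Fintype.sum_option]
        have h1 : ∑ a, ⟪v₀ a, p + q⟫_ℂ • v₀ a = p := by
          have : ∀ a, ⟪v₀ a, p + q⟫_ℂ = ⟪v₀ a, p⟫_ℂ := by
            intro a
            rw [inner_add_right, Submodule.inner_right_of_mem_orthogonal (hv₀mem a) hq, add_zero]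
          simp_rw [this]
          exact hv₀par p hp
        have h2 : ∑ k : K', ∑ a, ⟪(v' k a : E), p + q⟫_ℂ • (v' k a : E) = q := by
          have hmem : ∀ k a, (v' k a : E) ∈ Wᗮ := fun k a => Submodule.coe_mem _
          have hin : ∀ k a, ⟪(v' k a : E), p + q⟫_ℂ = ⟪v' k a, (⟨q, hq⟩ : ↥Wᗮ)⟫_ℂ := by
            intro k a
            rw [inner_add_right, Submodule.inner_left_of_mem_orthogonal hp (hmem k a), zero_add,
              Submodule.coe_inner]
          simp_rw [hin]
          have h4 := congrArg Subtype.val (hO3' (⟨q, hq⟩ : ↥Wᗮ))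
          rw [coe_sum] at h4
          simp_rw [coe_sum, Submodule.coe_smul] at h4
          exact h4
        rw [h1, h2]
      · rintro (_ | k) b
        · exact (hv₀par (A (v₀ b)) (hWA _ (hv₀mem b))).symm
        · have h4 := congrArg Subtype.val (hO4' k b)
          rw [coe_sum] at h4
          simp_rw [Submodule.coe_smul, Submodule.coe_inner, hA'c] at h4
          exact h4
      · rintro (_ | k) b
        · exact (hv₀par (B (v₀ b)) (hWB _ (hv₀mem b))).symm
        · have h4 := congrArg Subtype.val (hO5' k b)
          rw [coe_sum] at h4
          simp_rw [Submodule.coe_smul, Submodule.coe_inner, hB'c] at h4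
          exact h4


/-- The linear map on Euclidean space given by a matrix. -/
noncomputable def matLin {q : ℕ} (P : Matrix (Fin q) (Fin q) ℂ) :
    EuclideanSpace ℂ (Fin q) →ₗ[ℂ] EuclideanSpace ℂ (Fin q) where
  toFun x := WithLp.toLp 2 (fun j => ∑ l, P j l * x l)
  map_add' x y := by
    ext j
    simp only [PiLp.add_apply, mul_add, Finset.sum_add_distrib]
  map_smul' c x := by
    ext j
    simp only [PiLp.smul_apply, RingHom.id_apply, smul_eq_mul, Finset.mul_sum]
    congr 1; funext l; ring

theorem matLin_apply {q : ℕ} (P : Matrix (Fin q) (Fin q) ℂ) (x : EuclideanSpace ℂ (Fin q))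
    (j : Fin q) : matLin P x j = ∑ l, P j l * x l := rfl

theorem inner_eval {q : ℕ} (x : EuclideanSpace ℂ (Fin q)) (j : Fin q) :
    ⟪(EuclideanSpace.single j (1:ℂ) : EuclideanSpace ℂ (Fin q)), x⟫_ℂ = x j := by
  simp [PiLp.inner_apply, RCLike.inner_apply, EuclideanSpace.single_apply, apply_ite]

theorem eval_inner {q : ℕ} (x : EuclideanSpace ℂ (Fin q)) (j : Fin q) :
    ⟪x, (EuclideanSpace.single j (1:ℂ) : EuclideanSpace ℂ (Fin q))⟫_ℂ = (starRingEnd ℂ) (x j) := by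
  simp [PiLp.inner_apply, RCLike.inner_apply, EuclideanSpace.single_apply]

theorem matLin_symm {q : ℕ} (P : Matrix (Fin q) (Fin q) ℂ) (hP : P.IsHermitian) :
    ∀ x y : EuclideanSpace ℂ (Fin q), ⟪matLin P x, y⟫_ℂ = ⟪x, matLin P y⟫_ℂ := by
  intro x y
  simp only [PiLp.inner_apply, RCLike.inner_apply, matLin_apply, map_sum, map_mul,
    Finset.sum_mul, Finset.mul_sum]
  rw [Finset.sum_comm]
  refine Finset.sum_congr rfl fun j _ => Finset.sum_congr rfl fun l _ => ?_
  have : (starRingEnd ℂ) (P l j) = P j l := by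
    conv_rhs => rw [← hP]
    rfl
  rw [this]; ring

theorem matLin_idem {q : ℕ} (P : Matrix (Fin q) (Fin q) ℂ) (hP2 : P * P = P) :
    ∀ x : EuclideanSpace ℂ (Fin q), matLin P (matLin P x) = matLin P x := by
  intro x
  ext j
  simp only [matLin_apply, Finset.mul_sum]
  rw [Finset.sum_comm]
  have : ∀ l, (∑ c, P j c * P c l) * x l = P j l * x l := by
    intro l
    congr 1
    have := congrFun (congrFun hP2 j) l
    simpa [Matrix.mul_apply] using this
  calc ∑ l, ∑ c, P j c * (P c l * x l) = ∑ l, (∑ c, P j c * P c l) * x l := by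
        refine Finset.sum_congr rfl fun l _ => ?_
        rw [Finset.sum_mul]; congr 1; funext c; ring
    _ = ∑ l, P j l * x l := by simp_rw [this]



theorem herm_block {q : ℕ} {K : Type} (A : EuclideanSpace ℂ (Fin q) →ₗ[ℂ] EuclideanSpace ℂ (Fin q))
    (v : K → Fin 2 → EuclideanSpace ℂ (Fin q))
    (hAs : ∀ x y, ⟪A x, y⟫_ℂ = ⟪x, A y⟫_ℂ) (k : K) :
    (Matrix.of (fun a b => ⟪v k a, A (v k b)⟫_ℂ) : Matrix (Fin 2) (Fin 2) ℂ).IsHermitian := by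
  ext a b
  simp only [Matrix.conjTranspose_apply, Matrix.of_apply]
  calc star ⟪v k b, A (v k a)⟫_ℂ = (starRingEnd ℂ) ⟪v k b, A (v k a)⟫_ℂ := rfl
    _ = ⟪A (v k a), v k b⟫_ℂ := inner_conj_symm _ _
    _ = ⟪v k a, A (v k b)⟫_ℂ := hAs _ _

theorem idem_block {q : ℕ} {K : Type} [Fintype K]
    (A : EuclideanSpace ℂ (Fin q) →ₗ[ℂ] EuclideanSpace ℂ (Fin q))
    (v : K → Fin 2 → EuclideanSpace ℂ (Fin q))
    (hA2 : ∀ x, A (A x) = A x)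
    (hO4 : ∀ k b, A (v k b) = ∑ a, ⟪v k a, A (v k b)⟫_ℂ • v k a) (k : K) :
    (Matrix.of (fun a b => ⟪v k a, A (v k b)⟫_ℂ) : Matrix (Fin 2) (Fin 2) ℂ) *
      Matrix.of (fun a b => ⟪v k a, A (v k b)⟫_ℂ) =
      Matrix.of (fun a b => ⟪v k a, A (v k b)⟫_ℂ) := by
  ext a b
  rw [Matrix.mul_apply]
  simp only [Matrix.of_apply]
  calc ∑ c, ⟪v k a, A (v k c)⟫_ℂ * ⟪v k c, A (v k b)⟫_ℂ
      = ⟪v k a, A (A (v k b))⟫_ℂ := by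
        conv_rhs => rw [hO4 k b]
        rw [map_sum, inner_sum]
        refine Finset.sum_congr rfl fun c _ => ?_
        rw [map_smul, inner_smul_right]
        ring
    _ = ⟪v k a, A (v k b)⟫_ℂ := by rw [hA2]

theorem matP_inner {q : ℕ} (P : Matrix (Fin q) (Fin q) ℂ) (x y : Fin q) :
    P x y = ⟪(EuclideanSpace.single x (1:ℂ) : EuclideanSpace ℂ (Fin q)),
      matLin P (EuclideanSpace.single y (1:ℂ))⟫_ℂ := by
  rw [inner_eval, matLin_apply]
  simp [EuclideanSpace.single_apply]

theorem expand_block {q : ℕ} {K : Type} [Fintype K]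
    (A : EuclideanSpace ℂ (Fin q) →ₗ[ℂ] EuclideanSpace ℂ (Fin q))
    (v : K → Fin 2 → EuclideanSpace ℂ (Fin q))
    (hO3 : ∀ z : EuclideanSpace ℂ (Fin q), ∑ k, ∑ a, ⟪v k a, z⟫_ℂ • v k a = z)
    (hO4 : ∀ k b, A (v k b) = ∑ a, ⟪v k a, A (v k b)⟫_ℂ • v k a)
    {P : Matrix (Fin q) (Fin q) ℂ}
    (hPA : ∀ x y, P x y = ⟪(EuclideanSpace.single x (1:ℂ) : EuclideanSpace ℂ (Fin q)),
      A (EuclideanSpace.single y (1:ℂ))⟫_ℂ) :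
    ∀ x y, P x y = ∑ k, ∑ a, ∑ b,
      (starRingEnd ℂ) ((starRingEnd ℂ) (v k a x)) *
        (Matrix.of (fun a b => ⟪v k a, A (v k b)⟫_ℂ) : Matrix (Fin 2) (Fin 2) ℂ) a b *
        (starRingEnd ℂ) (v k b y) := by
  intro x y
  have key : ∀ k b, ⟪(EuclideanSpace.single x (1:ℂ) : EuclideanSpace ℂ (Fin q)),
      A (v k b)⟫_ℂ = ∑ a, ⟪v k a, A (v k b)⟫_ℂ * v k a x := by
    intro k b
    conv_lhs => rw [hO4 k b]
    rw [inner_sum]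
    refine Finset.sum_congr rfl fun a _ => ?_
    rw [inner_smul_right, inner_eval]
  rw [hPA x y]
  conv_lhs => rw [← hO3 (EuclideanSpace.single y (1:ℂ))]
  rw [map_sum, inner_sum]
  refine Finset.sum_congr rfl fun k _ => ?_
  rw [map_sum, inner_sum]
  rw [Finset.sum_comm]
  refine Finset.sum_congr rfl fun a _ => ?_
  simp only [map_smul, inner_smul_right, key, eval_inner, Finset.mul_sum, Matrix.of_apply,
    RingHomCompTriple.comp_apply, RingHom.id_apply]
  refine Finset.sum_congr rfl fun b _ => ?_
  ring

theorem pair_decomp {q : ℕ} (P Q : Matrix (Fin q) (Fin q) ℂ)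
    (hPh : P.IsHermitian) (hP2 : P * P = P) (hQh : Q.IsHermitian) (hQ2 : Q * Q = Q) :
    ∃ (K : Type) (_ : Fintype K) (V : K → Fin 2 → Fin q → ℂ)
      (π ρ : K → Matrix (Fin 2) (Fin 2) ℂ),
      (∀ k, (π k).IsHermitian) ∧ (∀ k, π k * π k = π k) ∧
      (∀ k, (ρ k).IsHermitian) ∧ (∀ k, ρ k * ρ k = ρ k) ∧
      (∀ x y, (∑ k, ∑ a, (starRingEnd ℂ) (V k a x) * V k a y) = if x = y then 1 else 0) ∧
      (∀ x y, P x y = ∑ k, ∑ a, ∑ b, (starRingEnd ℂ) (V k a x) * π k a b * V k b y) ∧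
      (∀ x y, Q x y = ∑ k, ∑ a, ∑ b, (starRingEnd ℂ) (V k a x) * ρ k a b * V k b y) := by
  classical
  set E := EuclideanSpace ℂ (Fin q)
  set A := matLin P with hA
  set B := matLin Q with hB
  obtain ⟨K, instK, v, _, _, hO3, hO4, hO5⟩ :=
    jordan_blocks q E inferInstance inferInstance inferInstance
      (le_of_eq (finrank_euclideanSpace_fin)) A B
      (matLin_symm P hPh) (matLin_idem P hP2) (matLin_symm Q hQh) (matLin_idem Q hQ2)
  set e : Fin q → E := fun x => EuclideanSpace.single x (1:ℂ) with he
  refine ⟨K, instK, fun k a x => (starRingEnd ℂ) (v k a x),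
    fun k => Matrix.of (fun a b => ⟪v k a, A (v k b)⟫_ℂ),
    fun k => Matrix.of (fun a b => ⟪v k a, B (v k b)⟫_ℂ), ?_, ?_, ?_, ?_, ?_, ?_, ?_⟩
  · exact herm_block A v (matLin_symm P hPh)
  · exact idem_block A v (matLin_idem P hP2) (fun k b => hO4 k b)
  · exact herm_block B v (matLin_symm Q hQh)
  · exact idem_block B v (matLin_idem Q hQ2) (fun k b => hO5 k b)
  · -- resolution of identity
    intro x y
    have h0 := congrArg (fun z => ⟪e x, z⟫_ℂ) (hO3 (e y))
    rw [inner_sum] at h0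
    simp only [inner_sum, inner_smul_right] at h0
    have hx : ∀ k a, ⟪e x, v k a⟫_ℂ = v k a x := fun k a => inner_eval _ _
    have hy : ∀ k a, ⟪v k a, e y⟫_ℂ = (starRingEnd ℂ) (v k a y) := fun k a => eval_inner _ _
    have hxy : ⟪e x, e y⟫_ℂ = if x = y then 1 else 0 := by
      rw [inner_eval]
      simp only [he]
      rw [EuclideanSpace.single_apply]
    simp only [hx, hy, hxy] at h0
    rw [← h0]
    refine Finset.sum_congr rfl fun k _ => Finset.sum_congr rfl fun a _ => ?_
    rw [RingHomCompTriple.comp_apply]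
    simp only [RingHom.id_apply]
    ring
  · exact expand_block A v hO3 hO4 (fun x y => matP_inner P x y)
  · exact expand_block B v hO3 hO5 (fun x y => matP_inner Q x y)

end TCAux

namespace TCAux2

theorem qform_bounds {X : Type} [Fintype X] [DecidableEq X] (M : X → X → ℂ) (ψ : X → ℂ)
    (hH : ∀ x y, (starRingEnd ℂ) (M x y) = M y x)
    (hI : ∀ x y, ∑ z, M x z * M z y = M x y) :
    ∃ r : ℝ, (∑ x, ∑ y, (starRingEnd ℂ) (ψ x) * M x y * ψ y) = (r : ℂ) ∧ 0 ≤ r ∧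
      r ≤ ∑ x, Complex.normSq (ψ x) := by
  classical
  set u : X → ℂ := fun x => ∑ y, M x y * ψ y with hu
  have expand : ∀ x, (starRingEnd ℂ) (u x) * u x
      = ∑ y, ∑ z, M y x * (starRingEnd ℂ) (ψ y) * (M x z * ψ z) := by
    intro x
    rw [hu]
    simp only [map_sum, map_mul, hH]
    rw [Finset.sum_mul]
    refine Finset.sum_congr rfl fun y _ => ?_
    rw [Finset.mul_sum]
  have hS : (∑ x, ∑ y, (starRingEnd ℂ) (ψ x) * M x y * ψ y)
      = ∑ x, (starRingEnd ℂ) (u x) * u x := by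
    symm
    calc ∑ x, (starRingEnd ℂ) (u x) * u x
        = ∑ x, ∑ y, ∑ z, M y x * (starRingEnd ℂ) (ψ y) * (M x z * ψ z) :=
          Finset.sum_congr rfl fun x _ => expand x
      _ = ∑ y, ∑ z, ∑ x, M y x * (starRingEnd ℂ) (ψ y) * (M x z * ψ z) := by
          rw [Finset.sum_comm]
          exact Finset.sum_congr rfl fun y _ => Finset.sum_comm
      _ = ∑ y, ∑ z, (starRingEnd ℂ) (ψ y) * (∑ x, M y x * M x z) * ψ z := by
          refine Finset.sum_congr rfl fun y _ => Finset.sum_congr rfl fun z _ => ?_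
          rw [Finset.mul_sum, Finset.sum_mul]
          exact Finset.sum_congr rfl fun x _ => by ring
      _ = ∑ y, ∑ z, (starRingEnd ℂ) (ψ y) * M y z * ψ z := by simp_rw [hI]
  have hSu : (∑ x, ∑ y, (starRingEnd ℂ) (ψ x) * M x y * ψ y)
      = ∑ x, (starRingEnd ℂ) (ψ x) * u x := by
    refine Finset.sum_congr rfl fun x _ => ?_
    rw [hu, Finset.mul_sum]
    exact Finset.sum_congr rfl fun y _ => by ring
  refine ⟨∑ x, Complex.normSq (u x), ?_, Finset.sum_nonneg fun x _ => Complex.normSq_nonneg _, ?_⟩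
  · rw [hS]
    push_cast
    exact Finset.sum_congr rfl fun x _ => by rw [mul_comm, Complex.mul_conj]
  · -- Cauchy-Schwarz
    set Ψ : EuclideanSpace ℂ X := (WithLp.equiv 2 (X → ℂ)).symm ψ with hΨ
    set U : EuclideanSpace ℂ X := (WithLp.equiv 2 (X → ℂ)).symm u with hU
    have hinner : (inner ℂ Ψ U : ℂ) = ∑ x, (starRingEnd ℂ) (ψ x) * u x := by
      rw [PiLp.inner_apply]
      exact Finset.sum_congr rfl fun x _ => by
        simp [hΨ, hU, RCLike.inner_apply, mul_comm]
    have hnU : ‖U‖ ^ 2 = ∑ x, Complex.normSq (u x) := by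
      rw [EuclideanSpace.norm_eq, Real.sq_sqrt (Finset.sum_nonneg fun x _ => sq_nonneg _)]
      exact Finset.sum_congr rfl fun x _ => by
        simp [hU, Complex.sq_norm]
    have hnΨ : ‖Ψ‖ ^ 2 = ∑ x, Complex.normSq (ψ x) := by
      rw [EuclideanSpace.norm_eq, Real.sq_sqrt (Finset.sum_nonneg fun x _ => sq_nonneg _)]
      exact Finset.sum_congr rfl fun x _ => by
        simp [hΨ, Complex.sq_norm]
    have habs : ‖(inner ℂ Ψ U : ℂ)‖ = ∑ x, Complex.normSq (u x) := by
      rw [hinner, ← hSu, hS]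
      have : (∑ x, (starRingEnd ℂ) (u x) * u x) = ((∑ x, Complex.normSq (u x) : ℝ) : ℂ) := by
        push_cast
        exact Finset.sum_congr rfl fun x _ => by rw [mul_comm, Complex.mul_conj]
      rw [this, Complex.norm_real, Real.norm_of_nonneg
        (Finset.sum_nonneg fun x _ => Complex.normSq_nonneg _)]
    have hcs := norm_inner_le_norm (𝕜 := ℂ) Ψ U
    rw [habs] at hcs
    have h2 : ‖U‖ ^ 2 ≤ ‖Ψ‖ * ‖U‖ := by rw [hnU]; exact hcs
    nlinarith [norm_nonneg U, norm_nonneg Ψ, hnU, hnΨ, sq_nonneg (‖Ψ‖ - ‖U‖)]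

theorem sum_pi_pair {n : ℕ} (A B : Fin n → Type) [∀ i, Fintype (A i)] [∀ i, Fintype (B i)]
    (F : (∀ i, A i × B i) → ℂ) :
    (∑ T : ∀ i, A i × B i, F T) = ∑ u : ∀ i, A i, ∑ w : ∀ i, B i, F fun i => (u i, w i) := by
  rw [← Equiv.sum_comp (⟨fun p i => (p.1 i, p.2 i),
      fun T => (fun i => (T i).1, fun i => (T i).2), fun p => rfl, fun T => rfl⟩ :
      ((∀ i, A i) × (∀ i, B i)) ≃ (∀ i, A i × B i)) F, Fintype.sum_prod_type]
  rfl

theorem sum_swap5 {X Y U W Z : Type} [Fintype X] [Fintype Y] [Fintype U] [Fintype W] [Fintype Z]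
    (t : X → Y → U → W → Z → ℂ) :
    ∑ x, ∑ y, ∑ u, ∑ w, ∑ z, t x y u w z = ∑ u, ∑ w, ∑ z, ∑ x, ∑ y, t x y u w z := by
  calc ∑ x, ∑ y, ∑ u, ∑ w, ∑ z, t x y u w z
      = ∑ x, ∑ u, ∑ y, ∑ w, ∑ z, t x y u w z :=
        Finset.sum_congr rfl fun x _ => Finset.sum_comm
    _ = ∑ u, ∑ x, ∑ y, ∑ w, ∑ z, t x y u w z := Finset.sum_comm
    _ = ∑ u, ∑ x, ∑ w, ∑ y, ∑ z, t x y u w z :=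
        Finset.sum_congr rfl fun u _ => Finset.sum_congr rfl fun x _ => Finset.sum_comm
    _ = ∑ u, ∑ w, ∑ x, ∑ y, ∑ z, t x y u w z :=
        Finset.sum_congr rfl fun u _ => Finset.sum_comm
    _ = ∑ u, ∑ w, ∑ x, ∑ z, ∑ y, t x y u w z :=
        Finset.sum_congr rfl fun u _ => Finset.sum_congr rfl fun w _ =>
          Finset.sum_congr rfl fun x _ => Finset.sum_comm
    _ = ∑ u, ∑ w, ∑ z, ∑ x, ∑ y, t x y u w z :=
        Finset.sum_congr rfl fun u _ => Finset.sum_congr rfl fun w _ => Finset.sum_comm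

/-- The central tensor-decomposition computation. -/
theorem tensor_conj {n : ℕ} (q : Fin n → ℕ) (K : Fin n → Type) [∀ i, Fintype (K i)]
    (V : ∀ i, K i → Fin 2 → Fin (q i) → ℂ)
    (g : ∀ i, K i → Matrix (Fin 2) (Fin 2) ℂ)
    (M : ∀ i, Matrix (Fin (q i)) (Fin (q i)) ℂ)
    (hM : ∀ i x y, M i x y = ∑ k, ∑ a, ∑ b,
      (starRingEnd ℂ) (V i k a x) * g i k a b * V i k b y)
    (ψ : (∀ i, Fin (q i)) → ℂ) :
    ∑ x, ∑ y, (starRingEnd ℂ) (ψ x) * (∏ i, M i (x i) (y i)) * ψ y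
      = ∑ k : ∀ i, K i, ∑ a : ∀ i, Fin 2, ∑ b : ∀ i, Fin 2,
          (starRingEnd ℂ) (∑ x, (∏ i, V i (k i) (a i) (x i)) * ψ x)
            * (∏ i, g i (k i) (a i) (b i)) * (∑ y, (∏ i, V i (k i) (b i) (y i)) * ψ y) := by
  classical
  have hterm : ∀ x y : (∀ i, Fin (q i)), (∏ i, M i (x i) (y i)) =
      ∑ k : ∀ i, K i, ∑ a : ∀ i, Fin 2, ∑ b : ∀ i, Fin 2,
        (∏ i, (starRingEnd ℂ) (V i (k i) (a i) (x i))) * (∏ i, g i (k i) (a i) (b i)) *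
          (∏ i, V i (k i) (b i) (y i)) := by
    intro x y
    calc ∏ i, M i (x i) (y i)
        = ∏ i, ∑ t : K i × (Fin 2 × Fin 2),
            (starRingEnd ℂ) (V i t.1 t.2.1 (x i)) * g i t.1 t.2.1 t.2.2 * V i t.1 t.2.2 (y i) := by
          refine Finset.prod_congr rfl fun i _ => ?_
          rw [hM i (x i) (y i)]
          rw [Fintype.sum_prod_type]
          exact Finset.sum_congr rfl fun k _ => by rw [Fintype.sum_prod_type]
      _ = ∑ T : ∀ i, K i × (Fin 2 × Fin 2), ∏ i,
            ((starRingEnd ℂ) (V i (T i).1 (T i).2.1 (x i)) * g i (T i).1 (T i).2.1 (T i).2.2 *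
              V i (T i).1 (T i).2.2 (y i)) := Fintype.prod_sum _
      _ = ∑ k : ∀ i, K i, ∑ w : ∀ i, Fin 2 × Fin 2, ∏ i,
            ((starRingEnd ℂ) (V i (k i) (w i).1 (x i)) * g i (k i) (w i).1 (w i).2 *
              V i (k i) (w i).2 (y i)) :=
          sum_pi_pair K (fun _ => Fin 2 × Fin 2) _
      _ = ∑ k : ∀ i, K i, ∑ a : ∀ i, Fin 2, ∑ b : ∀ i, Fin 2, ∏ i,
            ((starRingEnd ℂ) (V i (k i) (a i) (x i)) * g i (k i) (a i) (b i) *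
              V i (k i) (b i) (y i)) :=
          Finset.sum_congr rfl fun k _ => sum_pi_pair (fun _ => Fin 2) (fun _ => Fin 2) _
      _ = ∑ k : ∀ i, K i, ∑ a : ∀ i, Fin 2, ∑ b : ∀ i, Fin 2,
            (∏ i, (starRingEnd ℂ) (V i (k i) (a i) (x i))) * (∏ i, g i (k i) (a i) (b i)) *
              (∏ i, V i (k i) (b i) (y i)) := by
          refine Finset.sum_congr rfl fun k _ => Finset.sum_congr rfl fun a _ =>
            Finset.sum_congr rfl fun b _ => ?_
          rw [Finset.prod_mul_distrib, Finset.prod_mul_distrib]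
  calc ∑ x, ∑ y, (starRingEnd ℂ) (ψ x) * (∏ i, M i (x i) (y i)) * ψ y
      = ∑ x, ∑ y, ∑ k : ∀ i, K i, ∑ a : ∀ i, Fin 2, ∑ b : ∀ i, Fin 2,
          ((starRingEnd ℂ) (ψ x) * (∏ i, (starRingEnd ℂ) (V i (k i) (a i) (x i)))) *
            (∏ i, g i (k i) (a i) (b i)) * ((∏ i, V i (k i) (b i) (y i)) * ψ y) := by
        refine Finset.sum_congr rfl fun x _ => Finset.sum_congr rfl fun y _ => ?_
        rw [hterm x y, Finset.mul_sum, Finset.sum_mul]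
        refine Finset.sum_congr rfl fun k _ => ?_
        rw [Finset.mul_sum, Finset.sum_mul]
        refine Finset.sum_congr rfl fun a _ => ?_
        rw [Finset.mul_sum, Finset.sum_mul]
        refine Finset.sum_congr rfl fun b _ => ?_
        ring
    _ = ∑ k : ∀ i, K i, ∑ a : ∀ i, Fin 2, ∑ b : ∀ i, Fin 2, ∑ x, ∑ y,
          ((starRingEnd ℂ) (ψ x) * (∏ i, (starRingEnd ℂ) (V i (k i) (a i) (x i)))) *
            (∏ i, g i (k i) (a i) (b i)) * ((∏ i, V i (k i) (b i) (y i)) * ψ y) :=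
        sum_swap5 _
    _ = ∑ k : ∀ i, K i, ∑ a : ∀ i, Fin 2, ∑ b : ∀ i, Fin 2,
          (starRingEnd ℂ) (∑ x, (∏ i, V i (k i) (a i) (x i)) * ψ x)
            * (∏ i, g i (k i) (a i) (b i)) * (∑ y, (∏ i, V i (k i) (b i) (y i)) * ψ y) := by
        refine Finset.sum_congr rfl fun k _ => Finset.sum_congr rfl fun a _ =>
          Finset.sum_congr rfl fun b _ => ?_
        rw [map_sum, Finset.sum_mul, Finset.sum_mul]
        refine Finset.sum_congr rfl fun x _ => ?_
        rw [Finset.mul_sum]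
        refine Finset.sum_congr rfl fun y _ => ?_
        rw [map_mul, map_prod]
        ring

theorem tensor_herm_idem {n : ℕ} (q : Fin n → ℕ) (M : ∀ i, Matrix (Fin (q i)) (Fin (q i)) ℂ)
    (hH : ∀ i, (M i).IsHermitian) (hI : ∀ i, M i * M i = M i) :
    (∀ x y : ∀ i, Fin (q i), (starRingEnd ℂ) (∏ i, M i (x i) (y i)) = ∏ i, M i (y i) (x i)) ∧
    (∀ x y : ∀ i, Fin (q i), ∑ z : ∀ i, Fin (q i), (∏ i, M i (x i) (z i)) * (∏ i, M i (z i) (y i))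
      = ∏ i, M i (x i) (y i)) := by
  classical
  constructor
  · intro x y
    rw [map_prod]
    refine Finset.prod_congr rfl fun i _ => ?_
    have := congrFun (congrFun (hH i) (y i)) (x i)
    simpa [Matrix.conjTranspose_apply] using this
  · intro x y
    calc ∑ z : ∀ i, Fin (q i), (∏ i, M i (x i) (z i)) * (∏ i, M i (z i) (y i))
        = ∑ z : ∀ i, Fin (q i), ∏ i, (M i (x i) (z i) * M i (z i) (y i)) := by
          refine Finset.sum_congr rfl fun z _ => ?_
          rw [Finset.prod_mul_distrib]
      _ = ∏ i, ∑ c, M i (x i) c * M i c (y i) :=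
          (Fintype.prod_sum (fun i c => M i (x i) c * M i c (y i))).symm
      _ = ∏ i, M i (x i) (y i) := by
          refine Finset.prod_congr rfl fun i _ => ?_
          have := congrFun (congrFun (hI i) (x i)) (y i)
          simpa [Matrix.mul_apply] using this


theorem prod_delta {n : ℕ} (q : Fin n → ℕ) (x y : ∀ i, Fin (q i)) :
    (∏ i, (1 : Matrix (Fin (q i)) (Fin (q i)) ℂ) (x i) (y i)) = if x = y then 1 else 0 := by
  classical
  simp only [Matrix.one_apply]
  by_cases h : x = y
  · subst h; simp
  · rw [if_neg h]
    obtain ⟨i, hi⟩ := Function.ne_iff.mp h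
    exact Finset.prod_eq_zero (Finset.mem_univ i) (if_neg hi)

theorem qsum_bounds {n : ℕ} (q : Fin n → ℕ) (M : ∀ i, Matrix (Fin (q i)) (Fin (q i)) ℂ)
    (hH : ∀ i, (M i).IsHermitian) (hI : ∀ i, M i * M i = M i)
    (ψ : (∀ i, Fin (q i)) → ℂ) (hψ : ∑ x, Complex.normSq (ψ x) = 1) :
    0 ≤ (∑ x, ∑ y, (starRingEnd ℂ) (ψ x) * (∏ i, M i (x i) (y i)) * ψ y).re ∧
      (∑ x, ∑ y, (starRingEnd ℂ) (ψ x) * (∏ i, M i (x i) (y i)) * ψ y).re ≤ 1 := by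
  classical
  obtain ⟨hbigH, hbigI⟩ := tensor_herm_idem q M hH hI
  obtain ⟨r, hr, hr0, hr1⟩ := qform_bounds (X := ∀ i, Fin (q i))
    (fun x y => ∏ i, M i (x i) (y i)) ψ hbigH hbigI
  rw [hr]
  rw [hψ] at hr1
  exact ⟨by simpa using hr0, by simpa using hr1⟩

end TCAux2

namespace TCGlue
open TC TCAux TCAux2

theorem coeff_sum {n : ℕ} (η : Fin n → ℝ) :
    ∑ T : Finset (Fin n), (∏ i ∈ T, (1 - η i)) * ∏ i ∈ Tᶜ, η i = 1 := by
  rw [← Fintype.prod_add]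
  simp

theorem coeff_nonneg {n : ℕ} {η : Fin n → ℝ} (hη : ∀ i, η i ∈ Set.Icc (0:ℝ) 1)
    (T : Finset (Fin n)) : 0 ≤ (∏ i ∈ T, (1 - η i)) * ∏ i ∈ Tᶜ, η i :=
  mul_nonneg (Finset.prod_nonneg fun i _ => by linarith [(hη i).2])
    (Finset.prod_nonneg fun i _ => (hη i).1)

theorem lossyBehavior_bounds {n : ℕ}
    (S : QStrategy (fun _ : Fin n => Bool) (fun _ : Fin n => Bool))
    (f : ∀ _ : Fin n, Bool → Bool) {η : Fin n → ℝ} (hη : ∀ i, η i ∈ Set.Icc (0:ℝ) 1)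
    (o d : Fin n → Bool) :
    0 ≤ lossyBehavior S f η o d ∧ lossyBehavior S f η o d ≤ 1 := by
  classical
  have hterm : ∀ T : Finset (Fin n),
      0 ≤ projBehavior S.dim
        (fun i oi di =>
          if i ∈ T then (if di = f i oi then (1 : Matrix (Fin (S.dim i)) (Fin (S.dim i)) ℂ) else 0)
          else S.proj i oi di) S.state o d ∧
      projBehavior S.dim
        (fun i oi di =>
          if i ∈ T then (if di = f i oi then (1 : Matrix (Fin (S.dim i)) (Fin (S.dim i)) ℂ) else 0)
          else S.proj i oi di) S.state o d ≤ 1 := by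
    intro T
    refine qsum_bounds S.dim _ ?_ ?_ S.state S.state_norm
    · intro i
      split_ifs
      · exact Matrix.isHermitian_one
      · exact Matrix.isHermitian_zero
      · exact S.proj_herm i (o i) (d i)
    · intro i
      split_ifs
      · rw [one_mul]
      · rw [mul_zero]
      · exact S.proj_idem i (o i) (d i)
  unfold lossyBehavior lossyProjBehavior
  constructor
  · exact Finset.sum_nonneg fun T _ => mul_nonneg (coeff_nonneg hη T) (hterm T).1
  · calc ∑ T : Finset (Fin n), ((∏ i ∈ T, (1 - η i)) * ∏ i ∈ Tᶜ, η i) * _ ≤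
        ∑ T : Finset (Fin n), ((∏ i ∈ T, (1 - η i)) * ∏ i ∈ Tᶜ, η i) :=
          Finset.sum_le_sum fun T _ => by
            calc ((∏ i ∈ T, (1 - η i)) * ∏ i ∈ Tᶜ, η i) * _ ≤
                ((∏ i ∈ T, (1 - η i)) * ∏ i ∈ Tᶜ, η i) * 1 :=
                  mul_le_mul_of_nonneg_left (hterm T).2 (coeff_nonneg hη T)
              _ = (∏ i ∈ T, (1 - η i)) * ∏ i ∈ Tᶜ, η i := mul_one _
      _ = 1 := coeff_sum η

theorem expUtility_le {n : ℕ} (w p : (Fin n → Bool) → (Fin n → Bool) → ℝ)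
    (h0 : ∀ o d, 0 ≤ p o d) (h1 : ∀ o d, p o d ≤ 1) :
    expUtility w p ≤ ∑ o, ∑ d, |w o d| := by
  refine Finset.sum_le_sum fun o _ => Finset.sum_le_sum fun d _ => ?_
  calc p o d * w o d ≤ |p o d * w o d| := le_abs_self _
    _ = |p o d| * |w o d| := abs_mul _ _
    _ ≤ 1 * |w o d| := by
        refine mul_le_mul_of_nonneg_right ?_ (abs_nonneg _)
        rw [abs_of_nonneg (h0 o d)]; exact h1 o d
    _ = |w o d| := one_mul _

/-- The trivial qubit strategy. -/
noncomputable def S₀ (n : ℕ) : QStrategy (fun _ : Fin n => Bool) (fun _ : Fin n => Bool) where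
  dim := fun _ => 2
  dim_pos := fun _ => by norm_num
  proj := fun i o d => if d then 1 else 0
  proj_herm := by
    intro i o d
    cases d
    · simpa using Matrix.isHermitian_zero
    · simpa using Matrix.isHermitian_one
  proj_idem := by intro i o d; cases d <;> simp
  proj_orth := by intro i o d d' h; cases d <;> cases d' <;> simp_all
  proj_sum := by intro i o; rw [Fintype.sum_bool]; simp
  state := fun x => if x = (fun _ => 0) then 1 else 0
  state_norm := by
    have h : ∀ x : Fin n → Fin 2, Complex.normSq (if x = (fun _ => (0 : Fin 2)) then (1:ℂ) else 0)
        = if x = (fun _ => 0) then 1 else 0 := by intro x; split <;> simp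
    rw [Finset.sum_congr rfl fun x _ => h x]
    simp

theorem lossyProj_smul {n : ℕ} (dim : Fin n → ℕ)
    (proj : ∀ i, Bool → Bool → Matrix (Fin (dim i)) (Fin (dim i)) ℂ)
    (ψ : (∀ i, Fin (dim i)) → ℂ) (f : ∀ _ : Fin n, Bool → Bool) (η : Fin n → ℝ) (c : ℝ)
    (o d : Fin n → Bool) :
    lossyProjBehavior dim proj (fun x => (c : ℂ) * ψ x) f η o d
      = c ^ 2 * lossyProjBehavior dim proj ψ f η o d := by
  unfold lossyProjBehavior
  rw [Finset.mul_sum]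
  refine Finset.sum_congr rfl fun T _ => ?_
  unfold projBehavior
  have : (∑ x, ∑ y, (starRingEnd ℂ) ((c:ℂ) * ψ x) *
        (∏ i, (if i ∈ T then (if d i = f i (o i) then (1 : Matrix (Fin (dim i)) (Fin (dim i)) ℂ) else 0)
          else proj i (o i) (d i)) (x i) (y i)) * ((c:ℂ) * ψ y))
      = ((c^2 : ℝ) : ℂ) * ∑ x, ∑ y, (starRingEnd ℂ) (ψ x) *
        (∏ i, (if i ∈ T then (if d i = f i (o i) then (1 : Matrix (Fin (dim i)) (Fin (dim i)) ℂ) else 0)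
          else proj i (o i) (d i)) (x i) (y i)) * ψ y := by
    rw [Finset.mul_sum]
    refine Finset.sum_congr rfl fun x _ => ?_
    rw [Finset.mul_sum]
    refine Finset.sum_congr rfl fun y _ => ?_
    rw [map_mul, Complex.conj_ofReal]
    push_cast
    ring
  rw [this, Complex.re_ofReal_mul]
  ring

theorem lossyProj_zero {n : ℕ} (dim : Fin n → ℕ)
    (proj : ∀ i, Bool → Bool → Matrix (Fin (dim i)) (Fin (dim i)) ℂ)
    (ψ : (∀ i, Fin (dim i)) → ℂ) (hψ : ∀ x, ψ x = 0)
    (f : ∀ _ : Fin n, Bool → Bool) (η : Fin n → ℝ) (o d : Fin n → Bool) :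
    lossyProjBehavior dim proj ψ f η o d = 0 := by
  unfold lossyProjBehavior projBehavior
  simp_rw [hψ]
  simp

theorem delta_qsum {X : Type} [Fintype X] [DecidableEq X] (ψ : X → ℂ) :
    (∑ x, ∑ y, (starRingEnd ℂ) (ψ x) * (if x = y then 1 else 0) * ψ y)
      = ((∑ x, Complex.normSq (ψ x) : ℝ) : ℂ) := by
  push_cast
  refine Finset.sum_congr rfl fun x _ => ?_
  rw [Finset.sum_eq_single x]
  · rw [if_pos rfl, mul_one, mul_comm, Complex.mul_conj]
  · intro y _ hy
    rw [if_neg (Ne.symm hy)]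
    ring
  · intro h; exact absurd (Finset.mem_univ x) h

theorem party_decomp {n : ℕ} (S : QStrategy (fun _ : Fin n => Bool) (fun _ : Fin n => Bool))
    (i : Fin n) :
    ∃ (K : Type) (_ : Fintype K) (V : K → Fin 2 → Fin (S.dim i) → ℂ)
      (π : Bool → Bool → K → Matrix (Fin 2) (Fin 2) ℂ),
      (∀ o d k, (π o d k).IsHermitian) ∧
      (∀ o d k, π o d k * π o d k = π o d k) ∧
      (∀ (o : Bool) (d d' : Bool) k, d ≠ d' → π o d k * π o d' k = 0) ∧
      (∀ o k, π o true k + π o false k = 1) ∧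
      (∀ o d x y, S.proj i o d x y
        = ∑ k, ∑ a, ∑ b, (starRingEnd ℂ) (V k a x) * π o d k a b * V k b y) ∧
      (∀ x y, (if x = y then (1:ℂ) else 0)
        = ∑ k, ∑ a, ∑ b, (starRingEnd ℂ) (V k a x) * (1 : Matrix (Fin 2) (Fin 2) ℂ) a b * V k b y) ∧
      (∀ x y, (0:ℂ)
        = ∑ k, ∑ a, ∑ b, (starRingEnd ℂ) (V k a x) * (0 : Matrix (Fin 2) (Fin 2) ℂ) a b * V k b y) := by
  classical
  obtain ⟨K, instK, V, p, r, hp1, hp2, hr1, hr2, hV, hP, hQ⟩ :=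
    pair_decomp (S.proj i false true) (S.proj i true true)
      (S.proj_herm i false true) (S.proj_idem i false true)
      (S.proj_herm i true true) (S.proj_idem i true true)
  set πt : Bool → K → Matrix (Fin 2) (Fin 2) ℂ := fun o => if o then r else p with hπt
  have hπth : ∀ o k, (πt o k).IsHermitian := by
    intro o k; cases o
    · simpa [hπt] using hp1 k
    · simpa [hπt] using hr1 k
  have hπti : ∀ o k, πt o k * πt o k = πt o k := by
    intro o k; cases o
    · simpa [hπt] using hp2 k
    · simpa [hπt] using hr2 k
  -- the representation lemma with block `1`
  have hrep1 : ∀ x y, (if x = y then (1:ℂ) else 0)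
      = ∑ k, ∑ a, ∑ b, (starRingEnd ℂ) (V k a x) * (1 : Matrix (Fin 2) (Fin 2) ℂ) a b * V k b y := by
    intro x y
    rw [← hV x y]
    refine Finset.sum_congr rfl fun k _ => Finset.sum_congr rfl fun a _ => ?_
    rw [Finset.sum_eq_single a]
    · rw [Matrix.one_apply_eq, mul_one]
    · intro b _ hb
      rw [Matrix.one_apply_ne (Ne.symm hb), mul_zero, zero_mul]
    · intro h; exact absurd (Finset.mem_univ a) h
  have hrep0 : ∀ x y, (0:ℂ)
      = ∑ k, ∑ a, ∑ b, (starRingEnd ℂ) (V k a x) * (0 : Matrix (Fin 2) (Fin 2) ℂ) a b * V k b y := by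
    intro x y
    symm
    refine Finset.sum_eq_zero fun k _ => Finset.sum_eq_zero fun a _ =>
      Finset.sum_eq_zero fun b _ => ?_
    simp
  have hreptrue : ∀ o x y, S.proj i o true x y
      = ∑ k, ∑ a, ∑ b, (starRingEnd ℂ) (V k a x) * πt o k a b * V k b y := by
    intro o x y; cases o
    · simpa [hπt] using hP x y
    · simpa [hπt] using hQ x y
  have hcompl : ∀ o : Bool, S.proj i o false = 1 - S.proj i o true := by
    intro o
    have := S.proj_sum i o
    rw [Fintype.sum_bool] at this
    rw [← this]; abel
  refine ⟨K, instK, V, fun o d => if d then πt o else fun k => 1 - πt o k,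
    ?_, ?_, ?_, ?_, ?_, hrep1, hrep0⟩
  · intro o d k; cases d
    · simpa using (Matrix.isHermitian_one).sub (hπth o k)
    · simpa using hπth o k
  · intro o d k; cases d
    · show (1 - πt o k) * (1 - πt o k) = 1 - πt o k
      have h := hπti o k
      calc (1 - πt o k) * (1 - πt o k) = 1 - πt o k - πt o k + πt o k * πt o k := by noncomm_ring
        _ = 1 - πt o k := by rw [h]; abel
    · simpa using hπti o k
  · intro o d d' k hdd'
    cases d <;> cases d'
    · exact absurd rfl hdd'
    · show (1 - πt o k) * πt o k = 0
      rw [sub_mul, one_mul, hπti o k, sub_self]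
    · show πt o k * (1 - πt o k) = 0
      rw [mul_sub, mul_one, hπti o k, sub_self]
    · exact absurd rfl hdd'
  · intro o k
    show πt o k + (1 - πt o k) = 1
    abel
  · intro o d x y; cases d
    · show S.proj i o false x y = ∑ k, ∑ a, ∑ b,
        (starRingEnd ℂ) (V k a x) * (1 - πt o k) a b * V k b y
      rw [hcompl o]
      have expand : ∀ k a b, (starRingEnd ℂ) (V k a x) * (1 - πt o k) a b * V k b y
          = (starRingEnd ℂ) (V k a x) * (1 : Matrix (Fin 2) (Fin 2) ℂ) a b * V k b y
            - (starRingEnd ℂ) (V k a x) * πt o k a b * V k b y := by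
        intro k a b
        rw [Matrix.sub_apply]
        ring
      simp_rw [expand, Finset.sum_sub_distrib]
      rw [← hrep1 x y, ← hreptrue o x y, Matrix.sub_apply, Matrix.one_apply]
    · simpa using hreptrue o x y

theorem sum_comm3 {A B C : Type} [Fintype A] [Fintype B] [Fintype C] (t : A → B → C → ℝ) :
    ∑ a, ∑ b, ∑ c, t a b c = ∑ c, ∑ a, ∑ b, t a b c := by
  calc ∑ a, ∑ b, ∑ c, t a b c = ∑ a, ∑ c, ∑ b, t a b c :=
        Finset.sum_congr rfl fun a _ => Finset.sum_comm
    _ = ∑ c, ∑ a, ∑ b, t a b c := Finset.sum_comm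

theorem key_le {n : ℕ} (w : (Fin n → Bool) → (Fin n → Bool) → ℝ) (η : Fin n → ℝ)
    (hη : ∀ i, η i ∈ Set.Icc (0:ℝ) 1)
    (S : QStrategy (fun _ : Fin n => Bool) (fun _ : Fin n => Bool))
    (f : ∀ _ : Fin n, Bool → Bool) :
    expUtility w (lossyBehavior S f η) ≤
      sSup {x : ℝ | ∃ (S' : QStrategy (fun _ : Fin n => Bool) (fun _ : Fin n => Bool))
        (f' : ∀ _ : Fin n, Bool → Bool),
        (∀ i, S'.dim i = 2) ∧ x = expUtility w (lossyBehavior S' f' η)} := by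
  classical
  choose K instK V π hherm hidem horth hsum hrep hrep1 hrep0 using fun i => party_decomp S i
  letI : ∀ i, Fintype (K i) := instK
  set φ : (∀ i, K i) → (∀ i, Fin 2) → ℂ :=
    fun k a => ∑ x, (∏ i, V i (k i) (a i) (x i)) * S.state x with hφ
  set lam : (∀ i, K i) → ℝ := fun k => ∑ a, Complex.normSq (φ k a) with hlam
  have hlam_nonneg : ∀ k, 0 ≤ lam k :=
    fun k => Finset.sum_nonneg fun a _ => Complex.normSq_nonneg _
  -- tensor decomposition for each loss pattern T
  have hconj : ∀ (o d : Fin n → Bool) (T : Finset (Fin n)),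
      (∑ x, ∑ y, (starRingEnd ℂ) (S.state x) *
        (∏ i, (if i ∈ T then (if d i = f i (o i) then (1 : Matrix (Fin (S.dim i)) (Fin (S.dim i)) ℂ) else 0)
          else S.proj i (o i) (d i)) (x i) (y i)) * S.state y)
      = ∑ k : ∀ i, K i, ∑ a : ∀ i, Fin 2, ∑ b : ∀ i, Fin 2,
          (starRingEnd ℂ) (φ k a) *
          (∏ i, (if i ∈ T then (if d i = f i (o i) then (1 : Matrix (Fin 2) (Fin 2) ℂ) else 0)
            else π i (o i) (d i) (k i)) (a i) (b i)) * (φ k b) := by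
    intro o d T
    refine tensor_conj S.dim K V
      (fun i ki => if i ∈ T then (if d i = f i (o i) then 1 else 0) else π i (o i) (d i) ki)
      (fun i => if i ∈ T then (if d i = f i (o i) then 1 else 0) else S.proj i (o i) (d i))
      ?_ S.state
    intro i x y
    by_cases hiT : i ∈ T
    · by_cases hd : d i = f i (o i)
      · simp only [hiT, if_true, hd]
        rw [Matrix.one_apply]
        exact hrep1 i x y
      · simp only [hiT, if_true, hd, if_false]
        rw [Matrix.zero_apply]
        exact hrep0 i x y
    · simp only [hiT, if_false]
      exact hrep i (o i) (d i) x y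
  -- decomposition of the lossy behavior
  have hmain : ∀ o d : Fin n → Bool, lossyBehavior S f η o d
      = ∑ k : ∀ i, K i, lossyProjBehavior (fun _ => 2)
          (fun i oi di => π i oi di (k i)) (φ k) f η o d := by
    intro o d
    unfold lossyBehavior lossyProjBehavior projBehavior
    simp_rw [hconj o d, Complex.re_sum, Finset.mul_sum]
    rw [Finset.sum_comm]
  -- sum of the weights is one
  have hlam_sum : ∑ k, lam k = 1 := by
    have hnorm := tensor_conj S.dim K V (fun i _ => 1) (fun i => 1)
      (fun i x y => by
        show (1 : Matrix (Fin (S.dim i)) (Fin (S.dim i)) ℂ) x y = _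
        rw [Matrix.one_apply]
        exact hrep1 i x y) S.state
    simp_rw [prod_delta, delta_qsum] at hnorm
    rw [S.state_norm] at hnorm
    have hnorm2 : ((1:ℝ) : ℂ) = ((∑ k, lam k : ℝ) : ℂ) := by
      rw [hnorm]
      simp_rw [hlam, hφ]
      push_cast
      rfl
    exact_mod_cast hnorm2.symm
  -- expected utility decomposition
  have hexp : expUtility w (lossyBehavior S f η) = ∑ k : ∀ i, K i,
      expUtility w (lossyProjBehavior (fun _ => 2)
        (fun i oi di => π i oi di (k i)) (φ k) f η) := by
    unfold expUtility
    simp_rw [hmain, Finset.sum_mul]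
    exact sum_comm3 _
  set Qset := {x : ℝ | ∃ (S' : QStrategy (fun _ : Fin n => Bool) (fun _ : Fin n => Bool))
      (f' : ∀ _ : Fin n, Bool → Bool),
      (∀ i, S'.dim i = 2) ∧ x = expUtility w (lossyBehavior S' f' η)} with hQset
  have hbdd : BddAbove Qset := by
    refine ⟨∑ o, ∑ d, |w o d|, ?_⟩
    rintro x ⟨S', f', _, rfl⟩
    exact expUtility_le w _ (fun o d => (lossyBehavior_bounds S' f' hη o d).1)
      (fun o d => (lossyBehavior_bounds S' f' hη o d).2)
  have hk : ∀ k : ∀ i, K i, expUtility w (lossyProjBehavior (fun _ => 2)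
      (fun i oi di => π i oi di (k i)) (φ k) f η) ≤ lam k * sSup Qset := by
    intro k
    by_cases h0 : lam k = 0
    · have hz : ∀ a, φ k a = 0 := by
        intro a
        have hnn : ∀ a ∈ Finset.univ, (0:ℝ) ≤ Complex.normSq (φ k a) :=
          fun a _ => Complex.normSq_nonneg _
        have h00 : ∑ a, Complex.normSq (φ k a) = 0 := h0
        exact Complex.normSq_eq_zero.mp
          ((Finset.sum_eq_zero_iff_of_nonneg hnn).mp h00 a (Finset.mem_univ a))
      have hzz : ∀ o d, lossyProjBehavior (fun _ => 2)
          (fun i oi di => π i oi di (k i)) (φ k) f η o d = 0 :=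
        fun o d => lossyProj_zero _ _ _ hz f η o d
      have : expUtility w (lossyProjBehavior (fun _ => 2)
          (fun i oi di => π i oi di (k i)) (φ k) f η) = 0 := by
        unfold expUtility
        exact Finset.sum_eq_zero fun o _ => Finset.sum_eq_zero fun d _ => by
          rw [hzz o d, zero_mul]
      rw [this, h0, zero_mul]
    · have hlampos : 0 < lam k := lt_of_le_of_ne (hlam_nonneg k) (Ne.symm h0)
      have hcc : Real.sqrt (lam k) * Real.sqrt (lam k) = lam k :=
        Real.mul_self_sqrt hlampos.le
      have hcpos : 0 < Real.sqrt (lam k) := Real.sqrt_pos.mpr hlampos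
      have hcne : (Real.sqrt (lam k) : ℂ) ≠ 0 := by
        exact_mod_cast Complex.ofReal_ne_zero.mpr hcpos.ne'
      set S' : QStrategy (fun _ : Fin n => Bool) (fun _ : Fin n => Bool) :=
        { dim := fun _ => 2
          dim_pos := fun _ => two_pos
          proj := fun i oi di => π i oi di (k i)
          proj_herm := fun i o' d' => hherm i o' d' (k i)
          proj_idem := fun i o' d' => hidem i o' d' (k i)
          proj_orth := fun i o' d' d'' h => horth i o' d' d'' (k i) h
          proj_sum := fun i o' => by rw [Fintype.sum_bool]; exact hsum i o' (k i)
          state := fun a => (Real.sqrt (lam k) : ℂ)⁻¹ * φ k a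
          state_norm := by
            have hterm : ∀ a, Complex.normSq ((Real.sqrt (lam k) : ℂ)⁻¹ * φ k a)
                = (lam k)⁻¹ * Complex.normSq (φ k a) := by
              intro a
              rw [Complex.normSq_mul, Complex.normSq_inv, Complex.normSq_ofReal, hcc]
            rw [Finset.sum_congr rfl fun a _ => hterm a, ← Finset.mul_sum]
            have : ∑ a, Complex.normSq (φ k a) = lam k := rfl
            rw [this, inv_mul_cancel₀ h0] } with hS'
      have hφeq : (fun a => (Real.sqrt (lam k) : ℂ) * S'.state a) = φ k := by
        funext a
        show (Real.sqrt (lam k) : ℂ) * ((Real.sqrt (lam k) : ℂ)⁻¹ * φ k a) = φ k a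
        field_simp
      have hscale : ∀ o d, lossyProjBehavior (fun _ => 2)
          (fun i oi di => π i oi di (k i)) (φ k) f η o d
          = lam k * lossyBehavior S' f η o d := by
        intro o d
        have hLB : lossyBehavior S' f η o d = lossyProjBehavior (fun _ => 2)
            (fun i oi di => π i oi di (k i)) S'.state f η o d := rfl
        rw [hLB, ← hφeq, lossyProj_smul]
        congr 1
        rw [sq, hcc]
      have heq : expUtility w (lossyProjBehavior (fun _ => 2)
          (fun i oi di => π i oi di (k i)) (φ k) f η)
          = lam k * expUtility w (lossyBehavior S' f η) := by
        unfold expUtility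
        rw [Finset.mul_sum]
        refine Finset.sum_congr rfl fun o _ => ?_
        rw [Finset.mul_sum]
        refine Finset.sum_congr rfl fun d _ => ?_
        rw [hscale o d]; ring
      rw [heq]
      refine mul_le_mul_of_nonneg_left (le_csSup hbdd ?_) (hlam_nonneg k)
      exact ⟨S', f, fun i => rfl, rfl⟩
  rw [hexp]
  calc ∑ k : ∀ i, K i, expUtility w (lossyProjBehavior (fun _ => 2)
        (fun i oi di => π i oi di (k i)) (φ k) f η)
      ≤ ∑ k : ∀ i, K i, lam k * sSup Qset := Finset.sum_le_sum fun k _ => hk k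
    _ = (∑ k : ∀ i, K i, lam k) * sSup Qset := (Finset.sum_mul _ _ _).symm
    _ = 1 * sSup Qset := by rw [hlam_sum]
    _ = sSup Qset := one_mul _

theorem lossyBehavior_one {n : ℕ} (S : QStrategy (fun _ : Fin n => Bool) (fun _ : Fin n => Bool))
    (f : ∀ _ : Fin n, Bool → Bool) : lossyBehavior S f (fun _ => 1) = S.behavior := by
  classical
  funext o d
  unfold lossyBehavior lossyProjBehavior QStrategy.behavior
  rw [Finset.sum_eq_single (∅ : Finset (Fin n))]
  · have hproj : (fun (i : Fin n) (oi di : Bool) =>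
        if i ∈ (∅ : Finset (Fin n)) then
          (if di = f i oi then (1 : Matrix (Fin (S.dim i)) (Fin (S.dim i)) ℂ) else 0)
        else S.proj i oi di) = S.proj := by
      funext i oi di
      simp
    rw [hproj]
    simp
  · intro T _ hT
    obtain ⟨i, hi⟩ := Finset.nonempty_iff_ne_empty.mpr hT
    rw [Finset.prod_eq_zero hi (by norm_num : (1:ℝ) - (fun _ : Fin n => (1:ℝ)) i = 0),
      zero_mul, zero_mul]
  · intro h; exact absurd (Finset.mem_univ _) h

theorem sSup_lossy_eq {n : ℕ} (w : (Fin n → Bool) → (Fin n → Bool) → ℝ) (η : Fin n → ℝ)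
    (hη : ∀ i, η i ∈ Set.Icc (0 : ℝ) 1) :
    sSup {x : ℝ | ∃ (S : QStrategy (fun _ : Fin n => Bool) (fun _ : Fin n => Bool))
        (f : ∀ _ : Fin n, Bool → Bool),
        x = expUtility w (lossyBehavior S f η)} =
      sSup {x : ℝ | ∃ (S : QStrategy (fun _ : Fin n => Bool) (fun _ : Fin n => Bool))
        (f : ∀ _ : Fin n, Bool → Bool),
        (∀ i, S.dim i = 2) ∧ x = expUtility w (lossyBehavior S f η)} := by
  apply le_antisymm
  · refine csSup_le ⟨_, ⟨S₀ n, fun _ _ => true, rfl⟩⟩ ?_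
    rintro x ⟨S, f, rfl⟩
    exact key_le w η hη S f
  · refine csSup_le_csSup ?_ ⟨_, ⟨S₀ n, fun _ _ => true, fun i => rfl, rfl⟩⟩ ?_
    · refine ⟨∑ o, ∑ d, |w o d|, ?_⟩
      rintro x ⟨S, f, rfl⟩
      exact expUtility_le w _ (fun o d => (lossyBehavior_bounds S f hη o d).1)
        (fun o d => (lossyBehavior_bounds S f hη o d).2)
    · rintro x ⟨S, f, _, hx⟩
      exact ⟨S, f, hx⟩

end TCGlue

open TC in
/-- for an (n,2,2) problem, the `{ηᵢ}`-lossy value equals the supremum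
restricted to quantum strategies using only qubits (`dim i = 2` for all `i`); in particular
(all `ηᵢ = 1`) the quantum value equals the supremum over qubit-only quantum strategies. -/
theorem lossyValue_qubit_sufficient {n : ℕ}
    (w : (Fin n → Bool) → (Fin n → Bool) → ℝ) (η : Fin n → ℝ)
    (hη : ∀ i, η i ∈ Set.Icc (0 : ℝ) 1) :
    sSup {x : ℝ | ∃ (S : QStrategy (fun _ : Fin n => Bool) (fun _ : Fin n => Bool))
        (f : ∀ _ : Fin n, Bool → Bool),
        x = expUtility w (lossyBehavior S f η)} =
      sSup {x : ℝ | ∃ (S : QStrategy (fun _ : Fin n => Bool) (fun _ : Fin n => Bool))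
        (f : ∀ _ : Fin n, Bool → Bool),
        (∀ i, S.dim i = 2) ∧ x = expUtility w (lossyBehavior S f η)} ∧
    qValue (O := fun _ : Fin n => Bool) (D := fun _ : Fin n => Bool) w =
      sSup {x : ℝ | ∃ S : QStrategy (fun _ : Fin n => Bool) (fun _ : Fin n => Bool),
        (∀ i, S.dim i = 2) ∧ x = expUtility w S.behavior} := by
  constructor
  · exact TCGlue.sSup_lossy_eq w η hη
  · have hη1 : ∀ i : Fin n, (fun _ : Fin n => (1:ℝ)) i ∈ Set.Icc (0:ℝ) 1 := by
      intro i; constructor <;> norm_num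
    have hA : {x : ℝ | ∃ S : QStrategy (fun _ : Fin n => Bool) (fun _ : Fin n => Bool),
        x = expUtility w S.behavior}
        = {x : ℝ | ∃ (S : QStrategy (fun _ : Fin n => Bool) (fun _ : Fin n => Bool))
            (f : ∀ _ : Fin n, Bool → Bool),
            x = expUtility w (lossyBehavior S f (fun _ => 1))} := by
      ext x
      constructor
      · rintro ⟨S, rfl⟩
        exact ⟨S, fun _ _ => true, by rw [TCGlue.lossyBehavior_one]⟩
      · rintro ⟨S, f, rfl⟩
        exact ⟨S, by rw [TCGlue.lossyBehavior_one]⟩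
    have hQ : {x : ℝ | ∃ S : QStrategy (fun _ : Fin n => Bool) (fun _ : Fin n => Bool),
        (∀ i, S.dim i = 2) ∧ x = expUtility w S.behavior}
        = {x : ℝ | ∃ (S : QStrategy (fun _ : Fin n => Bool) (fun _ : Fin n => Bool))
            (f : ∀ _ : Fin n, Bool → Bool),
            (∀ i, S.dim i = 2) ∧ x = expUtility w (lossyBehavior S f (fun _ => 1))} := by
      ext x
      constructor
      · rintro ⟨S, hd, rfl⟩
        exact ⟨S, fun _ _ => true, hd, by rw [TCGlue.lossyBehavior_one]⟩
      · rintro ⟨S, f, hd, rfl⟩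
        exact ⟨S, hd, by rw [TCGlue.lossyBehavior_one]⟩
    calc qValue (O := fun _ : Fin n => Bool) (D := fun _ : Fin n => Bool) w
        = sSup {x : ℝ | ∃ (S : QStrategy (fun _ : Fin n => Bool) (fun _ : Fin n => Bool))
            (f : ∀ _ : Fin n, Bool → Bool),
            x = expUtility w (lossyBehavior S f (fun _ => 1))} := by
          unfold qValue
          exact congrArg sSup hA
      _ = sSup {x : ℝ | ∃ (S : QStrategy (fun _ : Fin n => Bool) (fun _ : Fin n => Bool))
            (f : ∀ _ : Fin n, Bool → Bool),
            (∀ i, S.dim i = 2) ∧ x = expUtility w (lossyBehavior S f (fun _ => 1))} :=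
          TCGlue.sSup_lossy_eq w (fun _ => 1) hη1
      _ = sSup {x : ℝ | ∃ S : QStrategy (fun _ : Fin n => Bool) (fun _ : Fin n => Bool),
            (∀ i, S.dim i = 2) ∧ x = expUtility w S.behavior} := (congrArg sSup hQ).symm
end
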